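/- arXiv:2503.08971 — 5 statements merged into one kernel-verified Lean document; each statement's English description precedes it below -/
import Mathlib

section
/- Let V be a finite type and E a DAG on V. Let X, Y be distinct vertices and W a subset of V \ {X, Y} such that the causal ordering W < {X} < {Y} holds (neither X nor Y is an ancestor of any vertex of W, and Y is not an ancestor of X). Suppose there exist W ∈ W and Z ⊆ W \ {W} such that (i) W and Y are d-connected given Z, and (ii) W and Y are d-separated given Z ∪ {X}. Then there is a directed path from X to Y with at least one edge, and Z satisfies the back-door criterion relative to ({X}, {Y}); in particular, Z blocks every back-door path from X to Y. -/
open scoped Classical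

variable {V : Type*}

/-- `a` is an ancestor of `b` (every vertex is its own ancestor). -/
def Anc (E : V → V → Prop) (a b : V) : Prop := Relation.ReflTransGen E a b

/-- A path in a directed graph `E` from `a` to `b`: a sequence of distinct vertices
`a = vtx 0, …, vtx len = b` (`len ≥ 1`) in which consecutive vertices are joined
by an edge of `E` in either direction. -/
structure GPath (E : V → V → Prop) (a b : V) where
  len : ℕ
  len_pos : 0 < len
  vtx : ℕ → V
  first : vtx 0 = a
  last : vtx len = b
  inj : ∀ i j, i ≤ len → j ≤ len → vtx i = vtx j → i = j
  adj : ∀ i, i < len → E (vtx i) (vtx (i + 1)) ∨ E (vtx (i + 1)) (vtx i)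

namespace GPath

variable {E : V → V → Prop} {a b : V}

/-- The interior vertex at position `i` is a collider on the path. -/
def IsColliderAt (p : GPath E a b) (i : ℕ) : Prop :=
  0 < i ∧ i < p.len ∧ E (p.vtx (i - 1)) (p.vtx i) ∧ E (p.vtx (i + 1)) (p.vtx i)

/-- A path is open given `S` if no non-collider on it lies in `S` and every collider
on it has a descendant in `S`. -/
def OpenGiven (p : GPath E a b) (S : Set V) : Prop :=
  (∀ i, 0 < i → i < p.len → ¬ p.IsColliderAt i → p.vtx i ∉ S) ∧
  (∀ i, p.IsColliderAt i → ∃ d ∈ S, Anc E (p.vtx i) d)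

/-- A back-door path: the first edge points into the first vertex. -/
def IsBackdoor (p : GPath E a b) : Prop := E (p.vtx 1) (p.vtx 0)

/-- A causal (directed) path. -/
def Causal (p : GPath E a b) : Prop := ∀ i, i < p.len → E (p.vtx i) (p.vtx (i + 1))

/-- A path is proper with respect to `X` if only its first vertex lies in `X`. -/
def ProperFrom (p : GPath E a b) (X : Set V) : Prop :=
  ∀ i, 0 < i → i ≤ p.len → p.vtx i ∉ X

/-- The vertex `w` lies on the path. -/
def MemV (p : GPath E a b) (w : V) : Prop := ∃ i ≤ p.len, p.vtx i = w

/-- The number of colliders on the path. -/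
noncomputable def numColliders (p : GPath E a b) : ℕ := Set.ncard {i | p.IsColliderAt i}

end GPath

/-- `A` and `B` are d-separated given `S`: every path from `A` to `B` is blocked given `S`. -/
def DSep (E : V → V → Prop) (A B S : Set V) : Prop :=
  ∀ a ∈ A, ∀ b ∈ B, ∀ p : GPath E a b, ¬ p.OpenGiven S

/-- `A` and `B` are d-connected given `S`: some path from `A` to `B` is open given `S`. -/
def DConn (E : V → V → Prop) (A B S : Set V) : Prop :=
  ∃ a ∈ A, ∃ b ∈ B, ∃ p : GPath E a b, p.OpenGiven S

/-- The set of descendants of a vertex set `S`. -/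
def descendants (E : V → V → Prop) (S : Set V) : Set V := {d | ∃ s ∈ S, Anc E s d}

/-- `S` blocks every back-door path from `x` to `y`. -/
def BlocksBackdoor (E : V → V → Prop) (x y : V) (S : Set V) : Prop :=
  ∀ p : GPath E x y, p.IsBackdoor → ¬ p.OpenGiven S

/-- The back-door criterion for `Z` relative to `(X, Y)`. -/
def BackdoorCriterion (E : V → V → Prop) (X Y Z : Set V) : Prop :=
  Z ∩ descendants E X = ∅ ∧
  ∀ x ∈ X, ∀ y ∈ Y, BlocksBackdoor E x y (Z ∪ (X \ {x}))

/-- The adjustment criterion for `Z` relative to `(X, Y)`: (a) `Z` contains no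
descendant of any `w ∉ X` lying on a proper causal path from `X` to `Y`, and
(b) `Z` blocks every proper non-causal path from `X` to `Y`. -/
def AdjustmentCriterion (E : V → V → Prop) (X Y Z : Set V) : Prop :=
  (∀ w, w ∉ X →
      (∃ x ∈ X, ∃ y ∈ Y, ∃ p : GPath E x y, p.ProperFrom X ∧ p.Causal ∧ p.MemV w) →
      ∀ z ∈ Z, ¬ Anc E w z) ∧
  (∀ x ∈ X, ∀ y ∈ Y, ∀ p : GPath E x y, p.ProperFrom X → ¬ p.Causal → ¬ p.OpenGiven Z)

/-- Auxiliary: a walk (distinctness not required). -/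
structure GWalk (E : V → V → Prop) (a b : V) where
  len : ℕ
  len_pos : 0 < len
  vtx : ℕ → V
  first : vtx 0 = a
  last : vtx len = b
  adj : ∀ i, i < len → E (vtx i) (vtx (i + 1)) ∨ E (vtx (i + 1)) (vtx i)

namespace GWalk

variable {E : V → V → Prop} {a b : V}

def IsColliderAt (w : GWalk E a b) (i : ℕ) : Prop :=
  0 < i ∧ i < w.len ∧ E (w.vtx (i - 1)) (w.vtx i) ∧ E (w.vtx (i + 1)) (w.vtx i)

def OpenGiven (w : GWalk E a b) (S : Set V) : Prop :=
  (∀ i, 0 < i → i < w.len → ¬ w.IsColliderAt i → w.vtx i ∉ S) ∧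
  (∀ i, w.IsColliderAt i → ∃ d ∈ S, Anc E (w.vtx i) d)

end GWalk

lemma chainTrans {E : V → V → Prop} (vtx : ℕ → V) (k m : ℕ) (hk : k < m)
    (h : ∀ j, k ≤ j → j < m → E (vtx j) (vtx (j + 1))) :
    Relation.TransGen E (vtx k) (vtx m) := by
  induction m with
  | zero => omega
  | succ n ih =>
    rcases Nat.lt_or_ge k n with h1 | h1
    · exact (ih h1 (fun j hj hj' => h j hj (by omega))).tail (h n (by omega) (by omega))
    · have hkn : k = n := by omega
      subst hkn
      exact Relation.TransGen.single (h k le_rfl (by omega))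

lemma chainTransRev {E : V → V → Prop} (vtx : ℕ → V) (m k : ℕ) (hk : m < k)
    (h : ∀ j, m < j → j ≤ k → E (vtx j) (vtx (j - 1))) :
    Relation.TransGen E (vtx k) (vtx m) := by
  induction k with
  | zero => omega
  | succ n ih =>
    rcases Nat.lt_or_ge m n with h1 | h1
    · refine Relation.TransGen.head ?_ (ih h1 (fun j hj hj' => h j hj (by omega)))
      simpa using h (n + 1) (by omega) le_rfl
    · have hmn : m = n := by omega
      subst hmn
      exact Relation.TransGen.single (by simpa using h (m + 1) (by omega) le_rfl)

namespace GWalk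

variable {E : V → V → Prop} {a b : V}

lemma fwd (w : GWalk E a b) (k m : ℕ) (hkm : k < m) (hm : m ≤ w.len)
    (h0 : E (w.vtx k) (w.vtx (k + 1))) :
    (∀ j, k ≤ j → j < m → E (w.vtx j) (w.vtx (j + 1))) ∨
      ∃ c, k < c ∧ c < m ∧ w.IsColliderAt c ∧ Relation.TransGen E (w.vtx k) (w.vtx c) := by
  induction m with
  | zero => omega
  | succ n ih =>
    rcases Nat.lt_or_ge k n with h1 | h1
    · rcases ih h1 (by omega) with hc | ⟨c, hc1, hc2, hc3, hc4⟩
      · by_cases he : E (w.vtx n) (w.vtx (n + 1))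
        · left; intro j hj hj'
          rcases Nat.lt_or_ge j n with h2 | h2
          · exact hc j hj h2
          · have : j = n := by omega
            subst this; exact he
        · right
          refine ⟨n, h1, by omega, ⟨by omega, by omega, ?_, ?_⟩, chainTrans w.vtx k n h1 hc⟩
          · have hh := hc (n - 1) (by omega) (by omega)
            have : n - 1 + 1 = n := by omega
            rwa [this] at hh
          · rcases w.adj n (by omega) with h2 | h2
            · exact absurd h2 he
            · exact h2
      · exact Or.inr ⟨c, hc1, by omega, hc3, hc4⟩
    · have hkn : k = n := by omega
      subst hkn
      left; intro j hj hj'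
      have : j = k := by omega
      subst this; exact h0

lemma bwd (w : GWalk E a b) (m k : ℕ) (hmk : m < k) (hk : k ≤ w.len)
    (h0 : E (w.vtx k) (w.vtx (k - 1))) :
    (∀ j, m < j → j ≤ k → E (w.vtx j) (w.vtx (j - 1))) ∨
      ∃ c, m < c ∧ c < k ∧ w.IsColliderAt c ∧ Relation.TransGen E (w.vtx k) (w.vtx c) := by
  have key : ∀ d m', m' + d = k → 0 < d →
      (∀ j, m' < j → j ≤ k → E (w.vtx j) (w.vtx (j - 1))) ∨
      ∃ c, m' < c ∧ c < k ∧ w.IsColliderAt c ∧ Relation.TransGen E (w.vtx k) (w.vtx c) := by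
    intro d
    induction d with
    | zero => omega
    | succ n ih =>
      intro m' hm' _
      rcases Nat.eq_zero_or_pos n with hn | hn
      · subst hn
        left; intro j hj hj'
        have : j = k := by omega
        subst this; exact h0
      · rcases ih (m' + 1) (by omega) hn with hc | ⟨c, hc1, hc2, hc3, hc4⟩
        · have hm'k : m' + 1 < k := by omega
          rcases w.adj m' (by omega) with h2 | h2
          · right
            refine ⟨m' + 1, by omega, hm'k, ⟨by omega, by omega, by simpa using h2, ?_⟩,
              chainTransRev w.vtx (m' + 1) k hm'k hc⟩
            have hh := hc (m' + 2) (by omega) (by omega)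
            have : m' + 2 - 1 = m' + 1 := by omega
            rwa [this] at hh
          · left; intro j hj hj'
            rcases Nat.lt_or_ge (m' + 1) j with h3 | h3
            · exact hc j h3 hj'
            · have : j = m' + 1 := by omega
              subst this; simpa using h2
        · exact Or.inr ⟨c, by omega, hc2, hc3, hc4⟩
  exact key (k - m) m (by omega) (by omega)

end GWalk

namespace GWalk

variable {E : V → V → Prop} {a b : V}

lemma shortcut (hdag : Irreflexive (Relation.TransGen E)) (w : GWalk E a b)
    (S : Set V) (hopen : w.OpenGiven S) (hab : a ≠ b)
    (i j : ℕ) (hij : i < j) (hj : j ≤ w.len) (heq : w.vtx i = w.vtx j) :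
    ∃ w' : GWalk E a b, w'.len < w.len ∧ w'.OpenGiven S := by
  set d := j - i with hd
  set L := w.len - d with hL
  have hLpos : 0 < L := by
    rcases Nat.lt_or_ge d w.len with h | h
    · omega
    · exfalso
      have hi0 : i = 0 := by omega
      have hjl : j = w.len := by omega
      apply hab
      have h1 : a = w.vtx i := by rw [hi0, w.first]
      have h2 : w.vtx j = b := by rw [hjl, w.last]
      rw [h1, heq, h2]
  set f : ℕ → V := fun k => if k ≤ i then w.vtx k else w.vtx (k + d) with hf
  have hlow : ∀ s, s ≤ i → f s = w.vtx s := fun s hs => if_pos hs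
  have hhigh : ∀ s, i ≤ s → f s = w.vtx (s + d) := by
    intro s hs
    by_cases h : s ≤ i
    · have hsi : s = i := le_antisymm h hs
      subst hsi
      have : s + d = j := by omega
      rw [this, hf]
      simpa using heq
    · simp [hf, h]
  have hiL : i ≤ L := by omega
  have wadj : ∀ k, k < L → E (f k) (f (k + 1)) ∨ E (f (k + 1)) (f k) := by
    intro k hk
    rcases Nat.lt_or_ge k i with h | h
    · rw [hlow k (by omega), hlow (k + 1) (by omega)]
      exact w.adj k (by omega)
    · rw [hhigh k h, hhigh (k + 1) (by omega), show k + 1 + d = (k + d) + 1 by omega]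
      exact w.adj (k + d) (by omega)
  set w' : GWalk E a b :=
    ⟨L, hLpos, f, by rw [hlow 0 (by omega)]; exact w.first,
     by rw [hhigh L hiL, show L + d = w.len by omega]; exact w.last, wadj⟩ with hw'
  have hlen' : w'.len = L := rfl
  have hvtx' : w'.vtx = f := rfl
  -- collider correspondence
  have hcolLow : ∀ t, t < i → (w'.IsColliderAt t ↔ w.IsColliderAt t) := by
    intro t ht
    unfold IsColliderAt
    rw [hlen', hvtx', hlow t (by omega), hlow (t - 1) (by omega), hlow (t + 1) (by omega)]
    constructor
    · rintro ⟨h1, h2, h3, h4⟩; exact ⟨h1, by omega, h3, h4⟩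
    · rintro ⟨h1, h2, h3, h4⟩; exact ⟨h1, by omega, h3, h4⟩
  have hcolHigh : ∀ t, i < t → (w'.IsColliderAt t ↔ w.IsColliderAt (t + d)) := by
    intro t ht
    unfold IsColliderAt
    rw [hlen', hvtx', hhigh t (by omega), hhigh (t - 1) (by omega), hhigh (t + 1) (by omega),
      show t - 1 + d = t + d - 1 by omega, show t + 1 + d = t + d + 1 by omega]
    constructor
    · rintro ⟨h1, h2, h3, h4⟩; exact ⟨by omega, by omega, h3, h4⟩
    · rintro ⟨h1, h2, h3, h4⟩; exact ⟨by omega, by omega, h3, h4⟩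
  have hjun : 0 < i → i < L →
      (w'.IsColliderAt i ↔ (E (w.vtx (i - 1)) (w.vtx i) ∧ E (w.vtx (j + 1)) (w.vtx j))) := by
    intro hi0 hiL'
    unfold IsColliderAt
    rw [hlen', hvtx', hlow i le_rfl, hlow (i - 1) (by omega), hhigh (i + 1) (by omega),
      show i + 1 + d = j + 1 by omega]
    constructor
    · rintro ⟨h1, h2, h3, h4⟩; exact ⟨h3, by rwa [heq] at h4⟩
    · rintro ⟨h3, h4⟩; exact ⟨hi0, hiL', h3, by rwa [← heq] at h4⟩
  refine ⟨w', by rw [hlen']; omega, ?_, ?_⟩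
  · -- non-colliders not in S
    intro t ht0 htL hnc
    rw [hlen'] at htL
    rcases Nat.lt_trichotomy t i with ht | ht | ht
    · rw [hvtx', hlow t (by omega)]
      exact hopen.1 t ht0 (by omega) (fun hc => hnc ((hcolLow t ht).mpr hc))
    · subst ht
      by_cases hE1 : E (w.vtx (t - 1)) (w.vtx t)
      · have hE2 : ¬ E (w.vtx (j + 1)) (w.vtx j) := by
          intro hE2
          exact hnc ((hjun ht0 htL).mpr ⟨hE1, hE2⟩)
        have hjlen : j < w.len := by omega
        have hnc2 : ¬ w.IsColliderAt j := fun hc => hE2 hc.2.2.2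
        rw [hvtx', hlow t le_rfl, heq]
        exact hopen.1 j (by omega) hjlen hnc2
      · have hnc2 : ¬ w.IsColliderAt t := fun hc => hE1 hc.2.2.1
        rw [hvtx', hlow t le_rfl]
        exact hopen.1 t ht0 (by omega) hnc2
    · rw [hvtx', hhigh t (by omega)]
      exact hopen.1 (t + d) (by omega) (by omega)
        (fun hc => hnc ((hcolHigh t ht).mpr hc))
  · -- colliders have descendants in S
    intro t hc
    have ht0 : 0 < t := hc.1
    have htL : t < L := by have := hc.2.1; rwa [hlen'] at this
    rcases Nat.lt_trichotomy t i with ht | ht | ht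
    · rw [hvtx', hlow t (by omega)]
      exact hopen.2 t ((hcolLow t ht).mp hc)
    · subst ht
      obtain ⟨hE1, hE2⟩ := (hjun ht0 htL).mp hc
      by_cases hci : w.IsColliderAt t
      · rw [hvtx', hlow t le_rfl]
        exact hopen.2 t hci
      · have hE3 : ¬ E (w.vtx (t + 1)) (w.vtx t) := by
          intro h
          exact hci ⟨ht0, by omega, hE1, h⟩
        have hE4 : E (w.vtx t) (w.vtx (t + 1)) := by
          rcases w.adj t (by omega) with h | h
          · exact h
          · exact absurd h hE3
        rcases w.fwd t j hij hj hE4 with hchain | ⟨c, hc1, hc2, hc3, hc4⟩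
        · exfalso
          have := chainTrans w.vtx t j hij hchain
          rw [← heq] at this
          exact hdag _ this
        · obtain ⟨dd, hdd, hanc⟩ := hopen.2 c hc3
          refine ⟨dd, hdd, ?_⟩
          rw [hvtx', hlow t le_rfl]
          exact Relation.ReflTransGen.trans hc4.to_reflTransGen hanc
    · rw [hvtx', hhigh t (by omega)]
      exact hopen.2 (t + d) ((hcolHigh t ht).mp hc)

end GWalk

namespace GWalk

variable {E : V → V → Prop} {a b : V}

/-- From an open walk, obtain an open path (needs acyclicity and distinct endpoints). -/
lemma toPath (hdag : Irreflexive (Relation.TransGen E)) (hab : a ≠ b) :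
    ∀ n (w : GWalk E a b), w.len ≤ n → ∀ S : Set V, w.OpenGiven S →
      ∃ p : GPath E a b, p.OpenGiven S := by
  intro n
  induction n with
  | zero => intro w hw; exact absurd w.len_pos (by omega)
  | succ n ih =>
    intro w hw S hopen
    by_cases hinj : ∀ i j, i ≤ w.len → j ≤ w.len → w.vtx i = w.vtx j → i = j
    · refine ⟨⟨w.len, w.len_pos, w.vtx, w.first, w.last, hinj, w.adj⟩, ?_, ?_⟩
      · exact hopen.1
      · exact hopen.2
    · push_neg at hinj
      obtain ⟨i, j, hi, hj, heq, hne⟩ := hinj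
      rcases Nat.lt_or_ge i j with hij | hij
      · obtain ⟨w', hlt, hopen'⟩ := w.shortcut hdag S hopen hab i j hij hj heq
        exact ih w' (by omega) S hopen'
      · have hji : j < i := by omega
        obtain ⟨w', hlt, hopen'⟩ := w.shortcut hdag S hopen hab j i hji hi heq.symm
        exact ih w' (by omega) S hopen'

end GWalk

/-- Forget distinctness of a path to get a walk. -/
def GPath.toWalk {E : V → V → Prop} {a b : V} (p : GPath E a b) : GWalk E a b :=
  ⟨p.len, p.len_pos, p.vtx, p.first, p.last, p.adj⟩

/-- **R1 Entner (graphical version).** If `W₀ ∈ W` and `Z ⊆ W \ {W₀}` with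
`W₀` and `Y` d-connected given `Z` and d-separated given `Z ∪ {X}`, then there is a
directed path from `X` to `Y` with at least one edge, `Z` satisfies the back-door
criterion relative to `({X}, {Y})`, and `Z` blocks every back-door path from `X` to `Y`. -/
theorem stmt_0 [Fintype V] (E : V → V → Prop)
    (hdag : Irreflexive (Relation.TransGen E))
    (X Y : V) (hXY : X ≠ Y)
    (W : Set V) (hW : W ⊆ ({X, Y} : Set V)ᶜ)
    (hordWX : ∀ w ∈ W, ¬ Anc E X w) (hordWY : ∀ w ∈ W, ¬ Anc E Y w)
    (hordXY : ¬ Anc E Y X)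
    (W0 : V) (hW0 : W0 ∈ W)
    (Z : Set V) (hZ : Z ⊆ W \ {W0})
    (hconn : ∃ p : GPath E W0 Y, p.OpenGiven Z)
    (hsep : ∀ p : GPath E W0 Y, ¬ p.OpenGiven (Z ∪ {X})) :
    Relation.TransGen E X Y ∧
      BackdoorCriterion E {X} {Y} Z ∧
      BlocksBackdoor E X Y Z := by
  classical
  obtain ⟨p, hpopen⟩ := hconn
  have hW0XY := hW hW0
  simp only [Set.mem_compl_iff, Set.mem_insert_iff, Set.mem_singleton_iff, not_or] at hW0XY
  obtain ⟨hW0X, hW0Y⟩ := hW0XY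
  set w := p.toWalk with hwdef
  have hwlen : w.len = p.len := rfl
  have hwvtx : w.vtx = p.vtx := rfl
  have hwcol : ∀ t, w.IsColliderAt t ↔ p.IsColliderAt t := fun t => Iff.rfl
  have hXnoW : ∀ v, v ∈ W → ¬ Relation.TransGen E X v := fun v hv ht =>
    hordWX v hv ht.to_reflTransGen
  have hXcol : ∀ c, p.IsColliderAt c → ¬ Relation.TransGen E X (p.vtx c) := by
    intro c hc ht
    obtain ⟨z, hz, hanc⟩ := hpopen.2 c hc
    exact hordWX z (hZ hz).1 (Relation.ReflTransGen.trans ht.to_reflTransGen hanc)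
  -- locate X on p as a non-collider
  have hfail := hsep p
  have hcol2 : ∀ t, p.IsColliderAt t → ∃ d ∈ Z ∪ {X}, Anc E (p.vtx t) d := by
    intro t ht
    obtain ⟨z, hz, hanc⟩ := hpopen.2 t ht
    exact ⟨z, Set.mem_union_left _ hz, hanc⟩
  have hnall : ¬ ∀ t, 0 < t → t < p.len → ¬ p.IsColliderAt t → p.vtx t ∉ Z ∪ {X} := by
    intro h; exact hfail ⟨h, hcol2⟩
  push_neg at hnall
  obtain ⟨i, hi0, hilen, hinc, hiS⟩ := hnall
  have hiX : p.vtx i = X := by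
    rcases hiS with h | h
    · exact absurd h (hpopen.1 i hi0 hilen hinc)
    · exact h
  have hback : ¬ E (p.vtx i) (p.vtx (i - 1)) := by
    intro hE
    have hE' : E (w.vtx i) (w.vtx (i - 1)) := hE
    rcases w.bwd 0 i hi0 (by rw [hwlen]; omega) hE' with hchain | ⟨c, hc1, hc2, hc3, hc4⟩
    · have hT := chainTransRev w.vtx 0 i hi0 hchain
      rw [hwvtx, hiX, p.first] at hT
      exact hXnoW W0 hW0 hT
    · rw [hwvtx, hiX] at hc4
      exact hXcol c ((hwcol c).mp hc3) hc4
  have hEleft : E (p.vtx (i - 1)) (p.vtx i) := by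
    rcases p.adj (i - 1) (by omega) with h | h
    · rwa [show i - 1 + 1 = i by omega] at h
    · rw [show i - 1 + 1 = i by omega] at h
      exact absurd h hback
  have hEright : E (p.vtx i) (p.vtx (i + 1)) := by
    rcases p.adj i hilen with h | h
    · exact h
    · exact absurd ⟨hi0, hilen, hEleft, h⟩ hinc
  have hXY' : Relation.TransGen E X Y := by
    rcases w.fwd i p.len hilen le_rfl hEright with hchain | ⟨c, hc1, hc2, hc3, hc4⟩
    · have hT := chainTrans w.vtx i p.len hilen hchain
      rwa [hwvtx, hiX, p.last] at hT
    · rw [hwvtx, hiX] at hc4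
      exact absurd hc4 (hXcol c ((hwcol c).mp hc3))
  have hblocks : BlocksBackdoor E X Y Z := by
    intro q hqbd hqopen
    have hq0 : 0 < q.len := q.len_pos
    set g : ℕ → V := fun k => if k ≤ i then p.vtx k else q.vtx (k - i) with hg
    have hglow : ∀ s, s ≤ i → g s = p.vtx s := fun s hs => if_pos hs
    have hghigh : ∀ s, i ≤ s → g s = q.vtx (s - i) := by
      intro s hs
      by_cases h : s ≤ i
      · have hsi : s = i := le_antisymm h hs
        subst hsi
        have h1 : g s = X := by rw [hglow s le_rfl, hiX]
        have h2 : q.vtx (s - s) = X := by rw [Nat.sub_self, q.first]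
        rw [h1, h2]
      · simp [hg, h]
    have w2adj : ∀ k, k < i + q.len → E (g k) (g (k + 1)) ∨ E (g (k + 1)) (g k) := by
      intro k hk
      rcases Nat.lt_or_ge k i with h | h
      · rw [hglow k (by omega), hglow (k + 1) (by omega)]
        exact p.adj k (by omega)
      · rw [hghigh k h, hghigh (k + 1) (by omega), show k + 1 - i = (k - i) + 1 by omega]
        exact q.adj (k - i) (by omega)
    set w2 : GWalk E W0 Y := ⟨i + q.len, by omega, g,
      by rw [hglow 0 (by omega)]; exact p.first,
      by rw [hghigh (i + q.len) (by omega), show i + q.len - i = q.len by omega]; exact q.last,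
      w2adj⟩ with hw2
    have hw2len : w2.len = i + q.len := rfl
    have hw2vtx : w2.vtx = g := rfl
    have hcolLow : ∀ t, 0 < t → t < i → (w2.IsColliderAt t ↔ p.IsColliderAt t) := by
      intro t ht0 hti
      unfold GWalk.IsColliderAt GPath.IsColliderAt
      rw [hw2len, hw2vtx, hglow t (by omega), hglow (t - 1) (by omega), hglow (t + 1) (by omega)]
      constructor
      · rintro ⟨h1, h2, h3, h4⟩; exact ⟨h1, by omega, h3, h4⟩
      · rintro ⟨h1, h2, h3, h4⟩; exact ⟨h1, by omega, h3, h4⟩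
    have hcolHigh : ∀ t, i < t → t < i + q.len →
        (w2.IsColliderAt t ↔ q.IsColliderAt (t - i)) := by
      intro t ht hti
      unfold GWalk.IsColliderAt GPath.IsColliderAt
      rw [hw2len, hw2vtx, hghigh t (by omega), hghigh (t - 1) (by omega),
        hghigh (t + 1) (by omega), show t - 1 - i = t - i - 1 by omega,
        show t + 1 - i = t - i + 1 by omega]
      constructor
      · rintro ⟨h1, h2, h3, h4⟩; exact ⟨by omega, by omega, h3, h4⟩
      · rintro ⟨h1, h2, h3, h4⟩; exact ⟨by omega, by omega, h3, h4⟩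
    have hjunc : w2.IsColliderAt i := by
      refine ⟨hi0, by rw [hw2len]; omega, ?_, ?_⟩
      · rw [hw2vtx, hglow i le_rfl, hglow (i - 1) (by omega)]
        exact hEleft
      · rw [hw2vtx, hghigh (i + 1) (by omega), show i + 1 - i = 1 by omega,
          hglow i le_rfl, hiX]
        have hq : E (q.vtx 1) (q.vtx 0) := hqbd
        rw [q.first] at hq
        exact hq
    have hw2open : w2.OpenGiven (Z ∪ {X}) := by
      constructor
      · intro t ht0 htl hnc
        rw [hw2len] at htl
        rcases Nat.lt_trichotomy t i with ht | ht | ht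
        · rw [hw2vtx, hglow t (by omega)]
          have hnotZ := hpopen.1 t ht0 (by omega) (fun hc => hnc ((hcolLow t ht0 ht).mpr hc))
          intro hmem
          rcases hmem with h | h
          · exact hnotZ h
          · have := p.inj t i (by omega) (by omega)
              (by rw [Set.mem_singleton_iff] at h; rw [h, hiX])
            omega
        · exact absurd (ht ▸ hjunc) hnc
        · rw [hw2vtx, hghigh t (by omega)]
          have hnotZ := hqopen.1 (t - i) (by omega) (by omega)
            (fun hc => hnc ((hcolHigh t ht htl).mpr hc))
          intro hmem
          rcases hmem with h | h
          · exact hnotZ h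
          · have := q.inj (t - i) 0 (by omega) (by omega)
              (by rw [Set.mem_singleton_iff] at h; rw [h, q.first])
            omega
      · intro t hc
        have ht0 : 0 < t := hc.1
        have htl : t < i + q.len := by have := hc.2.1; rwa [hw2len] at this
        rcases Nat.lt_trichotomy t i with ht | ht | ht
        · obtain ⟨z, hz, hanc⟩ := hpopen.2 t ((hcolLow t ht0 ht).mp hc)
          exact ⟨z, Set.mem_union_left _ hz, by rw [hw2vtx, hglow t (by omega)]; exact hanc⟩
        · refine ⟨X, Set.mem_union_right _ rfl, ?_⟩
          rw [hw2vtx, ht, hglow i le_rfl, hiX]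
          exact Relation.ReflTransGen.refl
        · obtain ⟨z, hz, hanc⟩ := hqopen.2 (t - i) ((hcolHigh t ht htl).mp hc)
          exact ⟨z, Set.mem_union_left _ hz, by rw [hw2vtx, hghigh t (by omega)]; exact hanc⟩
    obtain ⟨r, hr⟩ := GWalk.toPath hdag hW0Y w2.len w2 le_rfl (Z ∪ {X}) hw2open
    exact hsep r hr
  refine ⟨hXY', ⟨?_, ?_⟩, hblocks⟩
  · ext v
    simp only [Set.mem_inter_iff, descendants, Set.mem_setOf_eq, Set.mem_singleton_iff,
      Set.mem_empty_iff_false, iff_false, not_and]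
    rintro hvZ ⟨s, hs, hanc⟩
    exact hordWX v (hZ hvZ).1 (by rwa [Set.mem_singleton_iff.mp hs] at hanc)
  · intro x hx y hy
    rw [Set.mem_singleton_iff] at hx hy
    subst hx; subst hy
    have hset : (Z ∪ (({x} : Set V) \ {x})) = Z := by simp
    rw [hset]
    exact hblocks
end

section
/- Let X, Y, Z, T be random variables on a finite probability space with positive joint distribution. If either (i) X ⫫ Z | T and Y ⫫ T | (Z, X), or (ii) X ⫫ T | Z and Y ⫫ Z | (T, X), then Z and T are c-equivalent relative to (X, Y), i.e. for all values x, y: ∑_z P(y | x, z) P(Z = z) = ∑_t P(y | x, t) P(T = t). -/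
open scoped Classical

noncomputable def Pr {Ω : Type*} [Fintype Ω] (w : Ω → ℝ) (A : Set Ω) : ℝ :=
  ∑ ω, if ω ∈ A then w ω else 0

def CondIndepRV {Ω A' B' C' : Type*} [Fintype Ω] (w : Ω → ℝ)
    (A : Ω → A') (B : Ω → B') (C : Ω → C') : Prop :=
  ∀ (a : A') (b : B') (c : C'),
    Pr w {ω | A ω = a ∧ B ω = b ∧ C ω = c} / Pr w {ω | C ω = c} =
      (Pr w {ω | A ω = a ∧ C ω = c} / Pr w {ω | C ω = c}) *
      (Pr w {ω | B ω = b ∧ C ω = c} / Pr w {ω | C ω = c})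

/-!
In case (i), `Y ⫫ T | (Z, X)` gives `P(y | x, z) = P(y | x, z, t)` and `X ⫫ Z | T` gives
`P(z, t) / P(x, z, t) = P(t) / P(x, t)`, so
`P(y | x, z) P(z, t) = P(x, y, z, t) P(t) / P(x, t)` for all `z`, `t`. Summing over `t` gives the
adjustment through `Z`, summing over `z` the adjustment through `T`. Case (ii) is case (i) with
`Z` and `T` exchanged.
-/

open Finset

section FiniteProbability

variable {Ω : Type*} [Fintype Ω] (w : Ω → ℝ)

theorem Pr_eq_sum_and_eq {β : Type*} [Fintype β] (p : Ω → Prop) (g : Ω → β) :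
    Pr w {ω | p ω} = ∑ b, Pr w {ω | p ω ∧ g ω = b} := by
  simp only [Pr, Set.mem_ofPred_eq]
  rw [sum_comm]
  refine sum_congr rfl fun ω _ => ?_
  by_cases hp : p ω <;> simp [hp]

variable {w}

theorem Pr_preimage_pos {β : Type*} [Fintype β] {V : Ω → β}
    (hV : ∀ b, 0 < Pr w {ω | V ω = b}) {S : Set β} (hS : S.Nonempty) :
    0 < Pr w (V ⁻¹' S) := by
  obtain ⟨b₀, hb₀⟩ := hS
  have hterm : ∀ b, Pr w {ω | V ω ∈ S ∧ V ω = b} = if b ∈ S then Pr w {ω | V ω = b} else 0 := by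
    intro b
    split_ifs with hb
    · congr 1
      ext ω
      simp only [Set.mem_ofPred_eq, and_iff_right_iff_imp]
      rintro rfl
      exact hb
    · simp only [Pr, Set.mem_ofPred_eq]
      refine sum_eq_zero fun ω _ => if_neg ?_
      rintro ⟨hω, rfl⟩
      exact hb hω
  rw [show V ⁻¹' S = {ω | V ω ∈ S} from rfl, Pr_eq_sum_and_eq w _ V]
  refine sum_pos' (fun b _ => ?_) ⟨b₀, mem_univ _, ?_⟩
  · rw [hterm]
    split_ifs
    exacts [(hV b).le, le_rfl]
  · rw [hterm, if_pos hb₀]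
    exact hV b₀

theorem CondIndepRV.mul_eq_mul {A' B' C' : Type*} {A : Ω → A'} {B : Ω → B'} {C : Ω → C'}
    (h : CondIndepRV w A B C) (a : A') (b : B') {c : C'} (hc : Pr w {ω | C ω = c} ≠ 0) :
    Pr w {ω | A ω = a ∧ B ω = b ∧ C ω = c} * Pr w {ω | C ω = c} =
      Pr w {ω | A ω = a ∧ C ω = c} * Pr w {ω | B ω = b ∧ C ω = c} := by
  have e := h a b c
  rw [div_mul_div_comm, div_eq_div_iff hc (mul_ne_zero hc hc)] at e
  apply mul_right_cancel₀ hc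
  linear_combination e

end FiniteProbability

section CEquivalence

variable {Ω 𝒳 𝒴 𝒵 𝒯 : Type*} [Fintype Ω] [Fintype 𝒵] [Fintype 𝒯]

/-- The adjustment formula `∑ z, P(y | x, z) P(Z = z)`. -/
noncomputable def adjustment (w : Ω → ℝ) (X : Ω → 𝒳) (Y : Ω → 𝒴) (Z : Ω → 𝒵) (x : 𝒳) (y : 𝒴) :
    ℝ :=
  ∑ z, Pr w {ω | Y ω = y ∧ X ω = x ∧ Z ω = z} / Pr w {ω | X ω = x ∧ Z ω = z} *
    Pr w {ω | Z ω = z}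

variable {w : Ω → ℝ} {X : Ω → 𝒳} {Y : Ω → 𝒴} {Z : Ω → 𝒵} {T : Ω → 𝒯}

theorem adjustment_eq_of_condIndepRV (h₁ : CondIndepRV w X Z T)
    (h₂ : CondIndepRV w Y T fun ω => (Z ω, X ω)) (x : 𝒳) (y : 𝒴)
    (hT : ∀ t, Pr w {ω | T ω = t} ≠ 0) (hXZ : ∀ z, Pr w {ω | X ω = x ∧ Z ω = z} ≠ 0)
    (hXT : ∀ t, Pr w {ω | X ω = x ∧ T ω = t} ≠ 0) :
    adjustment w X Y Z x y = adjustment w X Y T x y := by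
  have key : ∀ z t,
      Pr w {ω | Y ω = y ∧ X ω = x ∧ Z ω = z} / Pr w {ω | X ω = x ∧ Z ω = z} *
          Pr w {ω | Z ω = z ∧ T ω = t} =
        Pr w {ω | (Y ω = y ∧ X ω = x ∧ T ω = t) ∧ Z ω = z} / Pr w {ω | X ω = x ∧ T ω = t} *
          Pr w {ω | T ω = t} := by
    intro z t
    have e₁ := h₁.mul_eq_mul x z (hT t)
    have e₂ : Pr w {ω | (Y ω = y ∧ X ω = x ∧ T ω = t) ∧ Z ω = z} *
          Pr w {ω | X ω = x ∧ Z ω = z} =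
        Pr w {ω | Y ω = y ∧ X ω = x ∧ Z ω = z} * Pr w {ω | X ω = x ∧ Z ω = z ∧ T ω = t} := by
      have hZX : Pr w {ω | (Z ω, X ω) = (z, x)} ≠ 0 := by
        simpa only [Prod.mk.injEq, and_comm] using hXZ z
      simpa only [Prod.mk.injEq, and_comm, and_left_comm, and_assoc] using
        h₂.mul_eq_mul y t hZX
    rw [div_mul_eq_mul_div, div_mul_eq_mul_div, div_eq_div_iff (hXZ z) (hXT t)]
    linear_combination -(Pr w {ω | T ω = t}) * e₂ -
      Pr w {ω | Y ω = y ∧ X ω = x ∧ Z ω = z} * e₁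
  calc adjustment w X Y Z x y
      = ∑ z, ∑ t, Pr w {ω | Y ω = y ∧ X ω = x ∧ Z ω = z} / Pr w {ω | X ω = x ∧ Z ω = z} *
          Pr w {ω | Z ω = z ∧ T ω = t} := by
        simp only [adjustment, Pr_eq_sum_and_eq w (fun ω => Z ω = _) T, mul_sum]
    _ = ∑ t, ∑ z, Pr w {ω | (Y ω = y ∧ X ω = x ∧ T ω = t) ∧ Z ω = z} /
          Pr w {ω | X ω = x ∧ T ω = t} * Pr w {ω | T ω = t} := by
        rw [sum_comm]
        simp only [key]
    _ = adjustment w X Y T x y := by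
        simp only [adjustment, ← sum_mul, ← sum_div, ← Pr_eq_sum_and_eq]

end CEquivalence

theorem stmt_2_general {Ω 𝒳 𝒴 𝒵 𝒯 : Type*} [Fintype Ω]
    [Fintype 𝒳] [Fintype 𝒴] [Fintype 𝒵] [Fintype 𝒯]
    (w : Ω → ℝ)
    (X : Ω → 𝒳) (Y : Ω → 𝒴) (Z : Ω → 𝒵) (T : Ω → 𝒯)
    (hpos : ∀ (x : 𝒳) (y : 𝒴) (z : 𝒵) (t : 𝒯),
      0 < Pr w {ω | X ω = x ∧ Y ω = y ∧ Z ω = z ∧ T ω = t})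
    (h : (CondIndepRV w X Z T ∧ CondIndepRV w Y T (fun ω => (Z ω, X ω))) ∨
         (CondIndepRV w X T Z ∧ CondIndepRV w Y Z (fun ω => (T ω, X ω)))) :
    ∀ (x : 𝒳) (y : 𝒴),
      (∑ z : 𝒵,
          (Pr w {ω | Y ω = y ∧ X ω = x ∧ Z ω = z} / Pr w {ω | X ω = x ∧ Z ω = z}) *
            Pr w {ω | Z ω = z}) =
      ∑ t : 𝒯,
          (Pr w {ω | Y ω = y ∧ X ω = x ∧ T ω = t} / Pr w {ω | X ω = x ∧ T ω = t}) *
            Pr w {ω | T ω = t} := by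
  intro x y
  rcases isEmpty_or_nonempty Ω with hΩ | hΩ
  · simp [Pr]
  obtain ⟨ω₀⟩ := hΩ
  have hatom : ∀ b, 0 < Pr w {ω | (X ω, Y ω, Z ω, T ω) = b} := fun ⟨x, y, z, t⟩ => by
    simpa only [Prod.mk.injEq] using hpos x y z t
  have hZ z : Pr w {ω | Z ω = z} ≠ 0 :=
    (Pr_preimage_pos hatom (S := {b | b.2.2.1 = z}) ⟨(x, y, z, T ω₀), rfl⟩).ne'
  have hT t : Pr w {ω | T ω = t} ≠ 0 :=
    (Pr_preimage_pos hatom (S := {b | b.2.2.2 = t}) ⟨(x, y, Z ω₀, t), rfl⟩).ne'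
  have hXZ z : Pr w {ω | X ω = x ∧ Z ω = z} ≠ 0 :=
    (Pr_preimage_pos hatom (S := {b | b.1 = x ∧ b.2.2.1 = z}) ⟨(x, y, z, T ω₀), rfl, rfl⟩).ne'
  have hXT t : Pr w {ω | X ω = x ∧ T ω = t} ≠ 0 :=
    (Pr_preimage_pos hatom (S := {b | b.1 = x ∧ b.2.2.2 = t}) ⟨(x, y, Z ω₀, t), rfl, rfl⟩).ne'
  rcases h with ⟨h₁, h₂⟩ | ⟨h₁, h₂⟩
  · exact adjustment_eq_of_condIndepRV h₁ h₂ x y hT hXZ hXT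
  · exact (adjustment_eq_of_condIndepRV h₁ h₂ x y hZ hXT hXZ).symm

/-- **Probabilistic criteria for c-equivalence.** If (i) `X ⫫ Z | T` and
`Y ⫫ T | (Z, X)`, or (ii) `X ⫫ T | Z` and `Y ⫫ Z | (T, X)`, then `Z` and `T` are
c-equivalent relative to `(X, Y)`:
`∑ z, P(y | x, z) P(Z = z) = ∑ t, P(y | x, t) P(T = t)` for all `x`, `y`. -/
theorem stmt_2 {Ω 𝒳 𝒴 𝒵 𝒯 : Type*} [Fintype Ω]
    [Fintype 𝒳] [Fintype 𝒴] [Fintype 𝒵] [Fintype 𝒯]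
    (w : Ω → ℝ) (hw0 : ∀ ω, 0 ≤ w ω) (hw1 : ∑ ω, w ω = 1)
    (X : Ω → 𝒳) (Y : Ω → 𝒴) (Z : Ω → 𝒵) (T : Ω → 𝒯)
    (hpos : ∀ (x : 𝒳) (y : 𝒴) (z : 𝒵) (t : 𝒯),
      0 < Pr w {ω | X ω = x ∧ Y ω = y ∧ Z ω = z ∧ T ω = t})
    (h : (CondIndepRV w X Z T ∧ CondIndepRV w Y T (fun ω => (Z ω, X ω))) ∨
         (CondIndepRV w X T Z ∧ CondIndepRV w Y Z (fun ω => (T ω, X ω)))) :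
    ∀ (x : 𝒳) (y : 𝒴),
      (∑ z : 𝒵,
          (Pr w {ω | Y ω = y ∧ X ω = x ∧ Z ω = z} / Pr w {ω | X ω = x ∧ Z ω = z}) *
            Pr w {ω | Z ω = z}) =
      ∑ t : 𝒯,
          (Pr w {ω | Y ω = y ∧ X ω = x ∧ T ω = t} / Pr w {ω | X ω = x ∧ T ω = t}) *
            Pr w {ω | T ω = t} :=
  stmt_2_general w X Y Z T hpos h
end

section
/- Let V be a finite type and E a DAG on V. Let X = {X₁, …, X_k} (k ≥ 1, distinct), {Y}, and W be pairwise disjoint vertex sets with causal ordering W < {X₁} < ⋯ < {X_k} < {Y}. Suppose there exist W_k ∈ W and Z ⊆ W \ {W_k} such that (i) W_k and Y are d-connected given Z ∪ {X₁, …, X_{k-1}}, and (ii) W_k and Y are d-separated given Z ∪ {X₁, …, X_k}. Then Z ∪ {X₁, …, X_{k-1}} blocks every back-door path from X_k to Y. -/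
/-!
Let `q` be a path from `W_k` to `Y` that is open given `S = Z ∪ {X₁, …, X_{k-1}}`. It is blocked
once `X_k` is added, so `X_k` is a non-collider on `q`; since `X_k` is an ancestor neither of `W_k`
nor of `S`, the edge of `q` arriving at `X_k` from the `W_k` side points into `X_k`. Now let `p` be
a back-door path from `X_k` to `Y` open given `S`. Follow `q` up to its first vertex on `p` and
continue along `p`. The junction is either `X_k` itself, which is then a collider lying in the
conditioning set, or a vertex whose openness is inherited from `q` and `p` (a collider there has a
descendant in `S` or is an ancestor of `X_k`). Hence the spliced path from `W_k` to `Y` is open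
given `S ∪ {X_k}`, contradicting d-separation.
-/

open scoped Classical

variable {V : Type*}

/-- The condition that `GPath.OpenGiven` imposes at an interior vertex `v` with neighbours
`u` and `w` on the path. -/
def OpenTriple (E : V → V → Prop) (S : Set V) (u v w : V) : Prop :=
  (E u v ∧ E w v → ∃ d ∈ S, Anc E v d) ∧ (¬ (E u v ∧ E w v) → v ∉ S)

lemma OpenTriple.insert {E : V → V → Prop} {S : Set V} {u v w x : V}
    (h : OpenTriple E S u v w) (hx : v = x → E u v ∧ E w v) :
    OpenTriple E (insert x S) u v w := by
  refine ⟨fun hc => ?_, fun hnc => ?_⟩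
  · obtain ⟨d, hd, hvd⟩ := h.1 hc
    exact ⟨d, Set.mem_insert_of_mem x hd, hvd⟩
  · rintro (rfl | hv)
    · exact hnc (hx rfl)
    · exact h.2 hnc hv

namespace GPath

variable {E : V → V → Prop} {a b : V}

lemma openGiven_iff (p : GPath E a b) (S : Set V) :
    p.OpenGiven S ↔ ∀ i, 0 < i → i < p.len →
      OpenTriple E S (p.vtx (i - 1)) (p.vtx i) (p.vtx (i + 1)) := by
  constructor
  · rintro ⟨hnc, hc⟩ i hi0 hilen
    exact ⟨fun h => hc i ⟨hi0, hilen, h⟩, fun h => hnc i hi0 hilen fun h' => h h'.2.2⟩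
  · intro h
    exact ⟨fun i hi0 hilen hnc => (h i hi0 hilen).2 fun h' => hnc ⟨hi0, hilen, h'⟩,
      fun i hc => (h i hc.1 hc.2.1).1 hc.2.2⟩

lemma vtx_ne_first (p : GPath E a b) {i : ℕ} (hi0 : 0 < i) (hi : i ≤ p.len) : p.vtx i ≠ a := by
  intro h
  have := p.inj i 0 hi (Nat.zero_le _) (h.trans p.first.symm)
  omega

/-- Walking back along a path from an edge that points backwards, every edge keeps pointing
backwards until either the first vertex or a collider is reached. -/
lemma anc_first_or_anc_collider (p : GPath E a b) {j : ℕ} (hj : j < p.len)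
    (hE : E (p.vtx (j + 1)) (p.vtx j)) :
    Anc E (p.vtx (j + 1)) a ∨ ∃ c, p.IsColliderAt c ∧ Anc E (p.vtx (j + 1)) (p.vtx c) := by
  induction j with
  | zero =>
    rw [p.first] at hE
    exact Or.inl (Relation.ReflTransGen.single hE)
  | succ j ih =>
    rcases p.adj j (by omega) with h | h
    · exact Or.inr ⟨j + 1, ⟨j.succ_pos, hj, h, hE⟩, Relation.ReflTransGen.single hE⟩
    · rcases ih (by omega) h with h' | ⟨c, hc, h'⟩
      · exact Or.inl (Relation.ReflTransGen.head hE h')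
      · exact Or.inr ⟨c, hc, Relation.ReflTransGen.head hE h'⟩

lemma OpenGiven.anc_first_or_anc_mem {p : GPath E a b} {S : Set V} (hp : p.OpenGiven S)
    {j : ℕ} (hj : j < p.len) (hE : E (p.vtx (j + 1)) (p.vtx j)) :
    Anc E (p.vtx (j + 1)) a ∨ ∃ d ∈ S, Anc E (p.vtx (j + 1)) d := by
  rcases p.anc_first_or_anc_collider hj hE with h | ⟨c, hc, hanc⟩
  · exact Or.inl h
  · obtain ⟨d, hd, hcd⟩ := hp.2 c hc
    exact Or.inr ⟨d, hd, hanc.trans hcd⟩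

lemma OpenGiven.exists_nonCollider_eq_of_not_openGiven_insert {p : GPath E a b} {S : Set V}
    {x : V} (hp : p.OpenGiven S) (hx : ¬ p.OpenGiven (insert x S)) :
    ∃ i, 0 < i ∧ i < p.len ∧ p.vtx i = x ∧ ¬ p.IsColliderAt i := by
  by_contra! h
  refine hx ((p.openGiven_iff _).2 fun i hi0 hilen => ?_)
  refine ((p.openGiven_iff S).1 hp i hi0 hilen).insert fun hix => ?_
  exact (h i hi0 hilen hix).2.2

lemma OpenGiven.edge_into_of_not_anc {p : GPath E a b} {S : Set V} (hp : p.OpenGiven S) {i : ℕ}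
    (hi0 : 0 < i) (hi : i ≤ p.len) (hS : ∀ d ∈ S, ¬ Anc E (p.vtx i) d)
    (ha : ¬ Anc E (p.vtx i) a) : E (p.vtx (i - 1)) (p.vtx i) := by
  obtain ⟨j, rfl⟩ : ∃ j, i = j + 1 := ⟨i - 1, by omega⟩
  refine (p.adj j (by omega)).resolve_right fun hE => ?_
  rcases hp.anc_first_or_anc_mem (by omega) hE with h | ⟨d, hd, h⟩
  exacts [ha h, hS d hd h]

/-- `u` stands for the predecessor of `p.vtx s` on a path that joins `p` at position `s`. -/
lemma OpenGiven.openTriple_insert_of_isBackdoor {x : V} {p : GPath E x b} {S : Set V}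
    (hp : p.OpenGiven S) (hbd : p.IsBackdoor) {s : ℕ} (hs : s < p.len) {u : V}
    (hu0 : s = 0 → E u x) (hu : ¬ E u (p.vtx s) → p.vtx s ∉ S) :
    OpenTriple E (insert x S) u (p.vtx s) (p.vtx (s + 1)) := by
  rcases Nat.eq_zero_or_pos s with rfl | hs0
  · rw [IsBackdoor, p.first] at hbd
    rw [p.first]
    have hcol : E u x ∧ E (p.vtx 1) x := ⟨hu0 rfl, hbd⟩
    exact ⟨fun _ => ⟨x, Set.mem_insert x S, Relation.ReflTransGen.refl⟩,
      fun hnc => absurd hcol hnc⟩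
  have hsx : p.vtx s ≠ x := p.vtx_ne_first hs0 hs.le
  refine ⟨fun hcol => ?_, fun hnc => ?_⟩
  · obtain ⟨j, rfl⟩ : ∃ j, s = j + 1 := ⟨s - 1, by omega⟩
    rcases p.adj j (by omega) with hE | hE
    · obtain ⟨d, hd, h⟩ := hp.2 (j + 1) ⟨hs0, hs, hE, hcol.2⟩
      exact ⟨d, Set.mem_insert_of_mem x hd, h⟩
    · rcases hp.anc_first_or_anc_mem (by omega) hE with h | ⟨d, hd, h⟩
      · exact ⟨x, Set.mem_insert x S, h⟩
      · exact ⟨d, Set.mem_insert_of_mem x hd, h⟩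
  · rintro (h | h)
    · exact hsx h
    by_cases huE : E u (p.vtx s)
    · exact hp.1 s hs0 hs (fun hc => hnc ⟨huE, hc.2.2.2⟩) h
    · exact hu huE h

section Splice

variable {c x : V} {t s : ℕ}

def splice (q : GPath E a c) (p : GPath E x b) (ht : t ≤ q.len) (hs : s < p.len)
    (hqp : p.vtx s = q.vtx t) (hmin : ∀ j < t, ∀ i ≤ p.len, p.vtx i ≠ q.vtx j) : GPath E a b where
  len := t + (p.len - s)
  len_pos := by omega
  vtx j := if j ≤ t then q.vtx j else p.vtx (s + (j - t))
  first := by simp [q.first]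
  last := by
    rw [if_neg (by omega), show s + (t + (p.len - s) - t) = p.len by omega, p.last]
  inj := by
    intro j₁ j₂ h₁ h₂ heq
    split_ifs at heq with c₁ c₂ c₂
    · exact q.inj _ _ (by omega) (by omega) heq
    · obtain hj | rfl := Nat.lt_or_eq_of_le c₁
      · exact absurd heq.symm (hmin j₁ hj _ (by omega))
      · have := p.inj _ _ (by omega) (by omega) (hqp.trans heq)
        omega
    · obtain hj | rfl := Nat.lt_or_eq_of_le c₂
      · exact absurd heq (hmin j₂ hj _ (by omega))
      · have := p.inj _ _ (by omega) (by omega) (heq.trans hqp.symm)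
        omega
    · have := p.inj _ _ (by omega) (by omega) heq
      omega
  adj := by
    intro j hj
    split_ifs with c₁ c₂
    · exact q.adj j (by omega)
    · rw [show j = t by omega, ← hqp, show s + (t + 1 - t) = s + 1 by omega]
      exact p.adj s hs
    · omega
    · rw [show s + (j + 1 - t) = s + (j - t) + 1 by omega]
      exact p.adj _ (by omega)

variable (q : GPath E a c) (p : GPath E x b) (ht : t ≤ q.len) (hs : s < p.len)
  (hqp : p.vtx s = q.vtx t) (hmin : ∀ j < t, ∀ i ≤ p.len, p.vtx i ≠ q.vtx j)

lemma splice_len : (splice q p ht hs hqp hmin).len = t + (p.len - s) := rfl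

lemma splice_vtx_of_le {j : ℕ} (hj : j ≤ t) : (splice q p ht hs hqp hmin).vtx j = q.vtx j :=
  if_pos hj

lemma splice_vtx_of_ge {j : ℕ} (hj : t ≤ j) :
    (splice q p ht hs hqp hmin).vtx j = p.vtx (s + (j - t)) := by
  obtain hj | rfl := Nat.lt_or_eq_of_le hj
  · exact if_neg (by omega)
  · rw [splice_vtx_of_le _ _ _ _ _ _ le_rfl, Nat.sub_self, Nat.add_zero, hqp]

lemma openGiven_insert_splice {S : Set V} (hq : q.OpenGiven S) (hp : p.OpenGiven S)
    (hbd : p.IsBackdoor) (ht' : t < q.len) (hqx : ∀ j < t, q.vtx j ≠ x)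
    (hs0 : s = 0 → E (q.vtx (t - 1)) x) :
    (splice q p ht hs hqp hmin).OpenGiven (insert x S) := by
  rw [openGiven_iff]
  intro j hj0 hj
  rw [splice_len] at hj
  rcases Nat.lt_trichotomy j t with hjt | rfl | hjt
  · rw [splice_vtx_of_le _ _ _ _ _ _ (by omega), splice_vtx_of_le _ _ _ _ _ _ hjt.le,
      splice_vtx_of_le _ _ _ _ _ _ hjt]
    exact ((q.openGiven_iff S).1 hq j hj0 (by omega)).insert fun h => absurd h (hqx j hjt)
  · rw [splice_vtx_of_le _ _ _ _ _ _ (by omega), splice_vtx_of_ge _ _ _ _ _ _ le_rfl,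
      splice_vtx_of_ge _ _ _ _ _ _ (by omega), Nat.sub_self, Nat.add_zero,
      show s + (j + 1 - j) = s + 1 by omega]
    refine hp.openTriple_insert_of_isBackdoor hbd hs hs0 fun hE => ?_
    rw [hqp]
    exact hq.1 j hj0 ht' fun hc => hE (hqp ▸ hc.2.2.1)
  · rw [splice_vtx_of_ge _ _ _ _ _ _ (by omega), splice_vtx_of_ge _ _ _ _ _ _ hjt.le,
      splice_vtx_of_ge _ _ _ _ _ _ (by omega), show s + (j - 1 - t) = s + (j - t) - 1 by omega,
      show s + (j + 1 - t) = s + (j - t) + 1 by omega]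
    exact ((p.openGiven_iff S).1 hp _ (by omega) (by omega)).insert
      fun h => absurd h (p.vtx_ne_first (by omega) (by omega))

end Splice

end GPath

open GPath in
theorem blocksBackdoor_of_openGiven_of_not_openGiven_insert {E : V → V → Prop} {x w y : V}
    {S : Set V} (hxS : ∀ d ∈ S, ¬ Anc E x d) (hxw : ¬ Anc E x w) (q : GPath E w y)
    (hq : q.OpenGiven S) (hsep : ∀ r : GPath E w y, ¬ r.OpenGiven (insert x S)) :
    BlocksBackdoor E x y S := by
  intro p hbd hp
  obtain ⟨i, hi0, hi, hqi, -⟩ := hq.exists_nonCollider_eq_of_not_openGiven_insert (hsep q)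
  have hedge : E (q.vtx (i - 1)) x :=
    hqi ▸ hq.edge_into_of_not_anc hi0 hi.le (hqi ▸ hxS) (hqi ▸ hxw)
  have hmem : ∃ s ≤ p.len, p.vtx s = q.vtx i := ⟨0, Nat.zero_le _, by rw [p.first, hqi]⟩
  obtain ⟨t, ⟨s, hs, hqp⟩, hti, hmin⟩ : ∃ t, (∃ s ≤ p.len, p.vtx s = q.vtx t) ∧ t ≤ i ∧
      ∀ j < t, ∀ s ≤ p.len, p.vtx s ≠ q.vtx j :=
    have hex : ∃ t, ∃ s ≤ p.len, p.vtx s = q.vtx t := ⟨i, hmem⟩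
    ⟨Nat.find hex, Nat.find_spec hex, Nat.find_min' hex hmem,
      fun j hj s hs h => Nat.find_min hex hj ⟨s, hs, h⟩⟩
  have hs' : s < p.len := by
    refine lt_of_le_of_ne hs fun hsl => ?_
    have := q.inj t q.len (by omega) le_rfl (by rw [← hqp, hsl, p.last, q.last])
    omega
  refine hsep (splice q p (by omega) hs' hqp hmin)
    (openGiven_insert_splice q p _ hs' hqp hmin hq hp hbd (by omega) ?_ ?_)
  · exact fun j hj hjx => hmin j hj 0 (Nat.zero_le _) (by rw [p.first, hjx])
  · rintro rfl
    have := q.inj t i (by omega) hi.le (by rw [← hqp, p.first, hqi])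
    rwa [this]

theorem stmt_6_general (E : V → V → Prop)
    (k : ℕ) (X : Fin (k + 1) → V)
    (Y : V) (W : Set V)
    (hordWX : ∀ i, ∀ w ∈ W, ¬ Anc E (X i) w)
    (hordXX : ∀ i j : Fin (k + 1), i < j → ¬ Anc E (X j) (X i))
    (Wk : V) (hWk : Wk ∈ W)
    (Z : Set V) (hZ : Z ⊆ W \ {Wk})
    (hconn : ∃ p : GPath E Wk Y,
      p.OpenGiven (Z ∪ X '' {j : Fin (k + 1) | j < Fin.last k}))
    (hsep : ∀ p : GPath E Wk Y, ¬ p.OpenGiven (Z ∪ Set.range X)) :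
    BlocksBackdoor E (X (Fin.last k)) Y
      (Z ∪ X '' {j : Fin (k + 1) | j < Fin.last k}) := by
  obtain ⟨q, hq⟩ := hconn
  have hrange : Z ∪ Set.range X =
      insert (X (Fin.last k)) (Z ∪ X '' {j : Fin (k + 1) | j < Fin.last k}) := by
    ext v
    simp only [Set.mem_union, Set.mem_range, Set.mem_insert_iff, Set.mem_image,
      Set.mem_ofPred_eq]
    constructor
    · rintro (hv | ⟨j, rfl⟩)
      · exact Or.inr (Or.inl hv)
      · rcases (Fin.le_last j).lt_or_eq with hj | rfl
        exacts [Or.inr (Or.inr ⟨j, hj, rfl⟩), Or.inl rfl]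
    · rintro (rfl | hv | ⟨j, -, rfl⟩)
      exacts [Or.inr ⟨_, rfl⟩, Or.inl hv, Or.inr ⟨j, rfl⟩]
  refine blocksBackdoor_of_openGiven_of_not_openGiven_insert ?_ (hordWX _ Wk hWk) q hq
    (hrange ▸ hsep)
  rintro d (hd | ⟨j, hj, rfl⟩)
  exacts [hordWX _ d (hZ hd).1, hordXX j _ hj]

/-- **R1 Build, base case (graphical version).** If `W_k ∈ W` and `Z ⊆ W \ {W_k}`
with `W_k` and `Y` d-connected given `Z ∪ {X 0, …, X (k-1)}` and d-separated given
`Z ∪ {X 0, …, X k}`, then `Z ∪ {X 0, …, X (k-1)}` blocks every back-door path from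
`X k` to `Y`. -/
theorem stmt_6 [Fintype V] (E : V → V → Prop)
    (hdag : Irreflexive (Relation.TransGen E))
    (k : ℕ) (X : Fin (k + 1) → V) (hXinj : Function.Injective X)
    (Y : V) (W : Set V)
    (hXY : ∀ i, X i ≠ Y) (hXW : ∀ i, X i ∉ W) (hYW : Y ∉ W)
    (hordWX : ∀ i, ∀ w ∈ W, ¬ Anc E (X i) w)
    (hordWY : ∀ w ∈ W, ¬ Anc E Y w)
    (hordXX : ∀ i j : Fin (k + 1), i < j → ¬ Anc E (X j) (X i))
    (hordXY : ∀ i, ¬ Anc E Y (X i))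
    (Wk : V) (hWk : Wk ∈ W)
    (Z : Set V) (hZ : Z ⊆ W \ {Wk})
    (hconn : ∃ p : GPath E Wk Y,
      p.OpenGiven (Z ∪ X '' {j : Fin (k + 1) | j < Fin.last k}))
    (hsep : ∀ p : GPath E Wk Y, ¬ p.OpenGiven (Z ∪ Set.range X)) :
    BlocksBackdoor E (X (Fin.last k)) Y
      (Z ∪ X '' {j : Fin (k + 1) | j < Fin.last k}) :=
  stmt_6_general E k X Y W hordWX hordXX Wk hWk Z hZ hconn hsep
end

section
/- Let V be a finite type and E a DAG on V, let W, X, Y be distinct vertices and S ⊆ V a vertex set. Suppose X is not an ancestor of W and X is not an ancestor of any vertex of S, and suppose p is a path from W to Y that is open given S and contains X as a non-collider. Then the edge of p between X and its predecessor points into X (so p contains → X), and the subpath of p from X to Y is a directed path X → ⋯ → Y. -/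
open scoped Classical

variable {V : Type*}

/-- If `X` is not an ancestor of `W` nor of any vertex of `S`, and a path `p` from `W`
to `Y` is open given `S` and contains `X` as a non-collider (at position `m`), then the
edge of `p` between `X` and its predecessor points into `X`, and the subpath of `p` from
`X` to `Y` is directed. -/
theorem stmt_7 [Fintype V] (E : V → V → Prop)
    (hdag : Irreflexive (Relation.TransGen E))
    (W X Y : V) (hWX : W ≠ X) (hWY : W ≠ Y) (hXY : X ≠ Y)
    (S : Set V)
    (hXW : ¬ Anc E X W) (hXS : ∀ s ∈ S, ¬ Anc E X s)
    (p : GPath E W Y) (hopen : p.OpenGiven S)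
    (m : ℕ) (hm0 : 0 < m) (hmlen : m < p.len)
    (hmX : p.vtx m = X) (hnc : ¬ p.IsColliderAt m) :
    E (p.vtx (m - 1)) (p.vtx m) ∧
      ∀ j, m ≤ j → j < p.len → E (p.vtx j) (p.vtx (j + 1)) := by
  subst hmX
  -- Part A: the edge before position m points into X
  have hA : E (p.vtx (m - 1)) (p.vtx m) := by
    rcases p.adj (m - 1) (by omega) with h | h
    · have e : m - 1 + 1 = m := by omega
      rwa [e] at h
    · exfalso
      have e : m - 1 + 1 = m := by omega
      rw [e] at h
      -- h : E (p.vtx m) (p.vtx (m-1)); walk leftwards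
      have chain : ∀ k, k ≤ m - 1 →
          Anc E (p.vtx m) (p.vtx (m - 1 - k)) ∧ E (p.vtx (m - k)) (p.vtx (m - 1 - k)) := by
        intro k
        induction k with
        | zero =>
          intro _
          refine ⟨Relation.ReflTransGen.single ?_, ?_⟩ <;> simpa using h
        | succ n ih =>
          intro hk
          obtain ⟨hanc, hedge⟩ := ih (by omega)
          set j := m - 1 - n with hj
          have hj0 : 0 < j := by omega
          have hjm : j < m := by omega
          have e1 : m - n = j + 1 := by omega
          rw [e1] at hedge
          have e2 : j - 1 + 1 = j := by omega
          rcases p.adj (j - 1) (by omega) with h1 | h1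
          · rw [e2] at h1
            exfalso
            have hc : p.IsColliderAt j := ⟨hj0, by omega, h1, hedge⟩
            obtain ⟨d, hdS, hdanc⟩ := hopen.2 j hc
            exact hXS d hdS (hanc.trans hdanc)
          · rw [e2] at h1
            have e3 : m - 1 - (n + 1) = j - 1 := by omega
            have e4 : m - (n + 1) = j := by omega
            rw [e3, e4]
            exact ⟨hanc.tail h1, h1⟩
      have := (chain (m - 1) le_rfl).1
      have e5 : m - 1 - (m - 1) = 0 := by omega
      rw [e5, p.first] at this
      exact hXW this
  -- Part B: the edge after position m points out of X
  have hB : E (p.vtx m) (p.vtx (m + 1)) := by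
    rcases p.adj m hmlen with h | h
    · exact h
    · exact absurd ⟨hm0, hmlen, hA, h⟩ hnc
  -- walk rightwards
  have right : ∀ d, m + d ≤ p.len →
      Anc E (p.vtx m) (p.vtx (m + d)) ∧
        (m + d < p.len → E (p.vtx (m + d)) (p.vtx (m + d + 1))) := by
    intro d
    induction d with
    | zero =>
      intro _
      exact ⟨Relation.ReflTransGen.refl, fun _ => hB⟩
    | succ n ih =>
      intro hd
      obtain ⟨hanc, hedge⟩ := ih (by omega)
      have hedge' := hedge (by omega)
      refine ⟨hanc.tail (by simpa [Nat.add_assoc] using hedge'), ?_⟩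
      intro hlt
      have e2 : m + n + 1 = m + (n + 1) := by omega
      rcases p.adj (m + (n + 1)) (by omega) with h1 | h1
      · exact h1
      · exfalso
        have hc : p.IsColliderAt (m + (n + 1)) := by
          refine ⟨by omega, by omega, ?_, h1⟩
          have e3 : m + (n + 1) - 1 = m + n := by omega
          rw [e3, ← e2]
          exact hedge'
        obtain ⟨s, hsS, hsanc⟩ := hopen.2 _ hc
        refine hXS s hsS ((hanc.tail ?_).trans hsanc)
        rw [← e2]
        exact hedge'
  refine ⟨hA, fun j hj1 hj2 => ?_⟩
  have := (right (j - m) (by omega)).2 (by omega)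
  have e : m + (j - m) = j := by omega
  rwa [e] at this
end

section
/- Let V be a finite type and E a DAG on V. Let X = {X₁, …, X_k} (k ≥ 1, distinct), {Y}, and W be pairwise disjoint vertex sets with causal ordering W < X < {Y}, and for each i let X_iᴺ = X \ De(X_i) be the vertices of X that are not descendants of X_i. Suppose there exist W₁, …, W_k ∈ W and sets T_i ⊆ (W \ {W₁, …, W_k}) ∪ X_iᴺ such that for every i: (i) W_i and Y are d-connected given T_i, and (ii) W_i and Y are d-separated given T_i ∪ {X_i}. Suppose further that for each i, Z_i ⊆ T_i is a set satisfying the adjustment criterion relative to ({X_i}, {Y}) such that no proper subset of Z_i satisfies the adjustment criterion relative to ({X_i}, {Y}). Then for every i there is a directed path from X_i to Y with at least one edge, and the set Z := (⋃_{i=1}^k Z_i) \ X satisfies the back-door criterion relative to (X, {Y}). -/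
open scoped Classical

variable {V : Type*}

/-! Each `X i` has a directed path to `Y`: on a path from `Wf i` to `Y` that is open given
`T i` but blocked once `X i` is added, `X i` must be a non-collider, and following edges out of
it along the path ends at `Y`, since neither `Wf i` nor `T i` contains a descendant of `X i`.
By minimality every `Zf i` lies in the ancestors of `X i` and `Y`, hence of `Y`; so does the
whole conditioning set `S = Z ∪ (X \ {X j})`, and `Zf j ⊆ S`. An open back-door path from `X j`
to `Y` given `S` is then turned into a proper back-door path open given `Zf j`, which contradicts
the adjustment criterion: a collider without descendant in `Zf j` is still an ancestor of `Y`,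
so the walk is rerouted along a directed path from it to `Y`, or to `X j`, and at the end loops
are cut out. -/

open Relation

section Walks

variable {E : V → V → Prop} {A S T : Set V} {x y : V} {n : ℕ} {f : ℕ → V}

def IsWalk (E : V → V → Prop) (n : ℕ) (f : ℕ → V) : Prop :=
  ∀ i < n, E (f i) (f (i + 1)) ∨ E (f (i + 1)) (f i)

def IsDirectedWalk (E : V → V → Prop) (n : ℕ) (f : ℕ → V) : Prop :=
  ∀ i < n, E (f i) (f (i + 1))

def InteriorOn (P : V → V → V → Prop) (lo hi : ℕ) (f : ℕ → V) : Prop :=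
  ∀ i, lo < i → i < hi → P (f (i - 1)) (f i) (f (i + 1))

def IsCollider (E : V → V → Prop) (u v w : V) : Prop := E u v ∧ E w v

def ColliderReaches (E : V → V → Prop) (A : Set V) (u v w : V) : Prop :=
  IsCollider E u v w → ∃ d ∈ A, Anc E v d

/-- `OpenAt E S S` is openness given `S` at one interior vertex; a larger `A` relaxes the
condition on colliders only. -/
def OpenAt (E : V → V → Prop) (A S : Set V) (u v w : V) : Prop :=
  ColliderReaches E A u v w ∧ (¬ IsCollider E u v w → v ∉ S)

def splice (f g : ℕ → V) (s i : ℕ) : V := if i ≤ s then f i else g (i - s)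

lemma edge_asymm (hdag : Irreflexive (TransGen E)) {u v : V} (h : E u v) : ¬ E v u :=
  fun h' => hdag u (.head h (.single h'))

lemma not_isCollider_of_edge_out (hdag : Irreflexive (TransGen E)) {u v w : V} (h : E v w) :
    ¬ IsCollider E u v w :=
  fun hc => edge_asymm hdag h hc.2

lemma openAt_of_not_isCollider {u v w : V} (hc : ¬ IsCollider E u v w) (hv : v ∉ S) :
    OpenAt E A S u v w :=
  ⟨fun h => (hc h).elim, fun _ => hv⟩

lemma OpenAt.symm {u v w : V} (h : OpenAt E A S u v w) : OpenAt E A S w v u :=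
  ⟨fun hc => h.1 ⟨hc.2, hc.1⟩, fun hc => h.2 fun hc' => hc ⟨hc'.2, hc'.1⟩⟩

lemma OpenAt.mono_left {B : Set V} {u v w : V} (h : OpenAt E A S u v w) (hAB : A ⊆ B) :
    OpenAt E B S u v w :=
  ⟨fun hc => (h.1 hc).imp fun _ hd => ⟨hAB hd.1, hd.2⟩, h.2⟩

lemma OpenAt.openAt_or_of_insert {u v w : V} (h : OpenAt E (insert y T) T u v w) :
    OpenAt E T T u v w ∨ ((∀ d, Anc E v d → d ∉ T) ∧ Anc E v y) := by
  by_cases hreach : ∃ d ∈ T, Anc E v d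
  · exact .inl ⟨fun _ => hreach, h.2⟩
  by_cases hc : IsCollider E u v w
  · obtain ⟨d, hd, hvd⟩ := h.1 hc
    rcases hd with rfl | hd
    · exact .inr ⟨fun d hvd hd => hreach ⟨d, hd, hvd⟩, hvd⟩
    · exact (hreach ⟨d, hd, hvd⟩).elim
  · exact .inl (openAt_of_not_isCollider hc (h.2 hc))

lemma splice_of_le {f g : ℕ → V} {s i : ℕ} (h : i ≤ s) : splice f g s i = f i := if_pos h

lemma splice_of_ge {f g : ℕ → V} {s i : ℕ} (hfg : f s = g 0) (h : s ≤ i) :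
    splice f g s i = g (i - s) := by
  unfold splice
  split_ifs with h'
  · rw [show i = s by omega, hfg, Nat.sub_self]
  · rfl

namespace IsWalk

lemma mono {m : ℕ} (hw : IsWalk E n f) (hm : m ≤ n) : IsWalk E m f :=
  fun i hi => hw i (by omega)

lemma shift (hw : IsWalk E n f) (m : ℕ) : IsWalk E (n - m) (fun i => f (m + i)) :=
  fun i hi => hw (m + i) (by omega)

lemma rev (hw : IsWalk E n f) : IsWalk E n (fun i => f (n - i)) := by
  intro i hi
  have := hw (n - (i + 1)) (by omega)
  rw [show n - (i + 1) + 1 = n - i by omega] at this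
  exact this.symm

lemma transGen_last_or_anc (hw : IsWalk E n f) (hc : InteriorOn (ColliderReaches E S) 0 n f)
    {j : ℕ} (hj : j < n) (he : E (f j) (f (j + 1))) :
    TransGen E (f j) (f n) ∨ ∃ d ∈ S, Anc E (f j) d := by
  by_cases hlast : j + 1 = n
  · subst hlast
    exact .inl (.single he)
  rcases hw (j + 1) (by omega) with he' | he'
  · rcases hw.transGen_last_or_anc hc (by omega) he' with h | ⟨d, hd, h⟩
    · exact .inl (.head he h)
    · exact .inr ⟨d, hd, .head he h⟩
  · obtain ⟨d, hd, h⟩ := hc (j + 1) (by omega) (by omega) ⟨by simpa using he, he'⟩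
    exact .inr ⟨d, hd, .head he h⟩
termination_by n - j

end IsWalk

namespace InteriorOn

variable {P Q : V → V → V → Prop} {lo hi : ℕ}

lemma mono (h : InteriorOn P lo hi f) (hPQ : ∀ u v w, P u v w → Q u v w) :
    InteriorOn Q lo hi f :=
  fun i h1 h2 => hPQ _ _ _ (h i h1 h2)

lemma mono_bounds {lo' hi' : ℕ} (h : InteriorOn P lo hi f) (hlo : lo ≤ lo') (hhi : hi' ≤ hi) :
    InteriorOn P lo' hi' f :=
  fun i h1 h2 => h i (by omega) (by omega)

lemma of_lo_succ (h : InteriorOn P (lo + 1) hi f)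
    (hlo : lo + 1 < hi → P (f (lo + 1 - 1)) (f (lo + 1)) (f (lo + 1 + 1))) :
    InteriorOn P lo hi f := by
  intro i h1 h2
  rcases (Nat.succ_le_of_lt h1).eq_or_lt with rfl | h1
  · exact hlo h2
  · exact h i h1 h2

lemma shift (h : InteriorOn P lo hi f) (m : ℕ) :
    InteriorOn P (lo - m) (hi - m) (fun i => f (m + i)) := by
  intro i h1 h2
  have := h (m + i) (by omega) (by omega)
  rwa [show m + i - 1 = m + (i - 1) by omega, show m + i + 1 = m + (i + 1) by omega] at this

lemma rev (h : InteriorOn P 0 hi f) (hP : ∀ u v w, P u v w → P w v u) :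
    InteriorOn P 0 hi (fun i => f (hi - i)) := by
  intro i h1 h2
  have := hP _ _ _ (h (hi - i) (by omega) (by omega))
  rwa [show hi - i - 1 = hi - (i + 1) by omega, show hi - i + 1 = hi - (i - 1) by omega] at this

end InteriorOn

lemma isWalk_splice {f g : ℕ → V} {s m : ℕ} (hfg : f s = g 0) (hf : IsWalk E s f)
    (hg : IsWalk E m g) : IsWalk E (s + m) (splice f g s) := by
  intro i hi
  rcases lt_or_ge i s with h | h
  · rw [splice_of_le h.le, splice_of_le h]
    exact hf i h
  · rw [splice_of_ge hfg h, splice_of_ge hfg (by omega), show i + 1 - s = i - s + 1 by omega]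
    exact hg _ (by omega)

lemma interiorOn_splice {P : V → V → V → Prop} {f g : ℕ → V} {lo s m : ℕ} (hfg : f s = g 0)
    (hf : InteriorOn P lo s f) (hj : lo < s → 0 < m → P (f (s - 1)) (f s) (g 1))
    (hg : InteriorOn P 0 m g) : InteriorOn P lo (s + m) (splice f g s) := by
  intro i h1 h2
  rcases lt_trichotomy i s with h | rfl | h
  · rw [splice_of_le (by omega), splice_of_le h.le, splice_of_le h]
    exact hf i h1 h
  · rw [splice_of_le (by omega), splice_of_le le_rfl, splice_of_ge hfg (by omega),
      show i + 1 - i = 1 by omega]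
    exact hj h1 (by omega)
  · rw [splice_of_ge hfg (by omega), splice_of_ge hfg h.le, splice_of_ge hfg (by omega),
      show i - 1 - s = i - s - 1 by omega, show i + 1 - s = i - s + 1 by omega]
    exact hg _ (by omega) (by omega)

namespace IsDirectedWalk

lemma isWalk (h : IsDirectedWalk E n f) : IsWalk E n f := fun i hi => .inl (h i hi)

lemma transGen (h : IsDirectedWalk E n f) {j k : ℕ} (hjk : j < k) (hk : k ≤ n) :
    TransGen E (f j) (f k) := by
  induction k, hjk using Nat.le_induction with
  | base => exact .single (h j hk)
  | succ k _ ih => exact (ih (by omega)).tail (h k hk)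

lemma anc (h : IsDirectedWalk E n f) {j k : ℕ} (hjk : j ≤ k) (hk : k ≤ n) :
    Anc E (f j) (f k) := by
  rcases hjk.eq_or_lt with rfl | hjk
  · exact .refl
  · exact (h.transGen hjk hk).to_reflTransGen

lemma interiorOn_openAt (hdag : Irreflexive (TransGen E)) (h : IsDirectedWalk E n f)
    (hS : ∀ i, 0 < i → i < n → f i ∉ S) : InteriorOn (OpenAt E A S) 0 n f :=
  fun i h1 h2 => openAt_of_not_isCollider (not_isCollider_of_edge_out hdag (h i h2)) (hS i h1 h2)

end IsDirectedWalk

lemma exists_isDirectedWalk (h : Anc E x y) : ∃ n f, IsDirectedWalk E n f ∧ f 0 = x ∧ f n = y := by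
  induction h using Relation.ReflTransGen.head_induction_on with
  | refl => exact ⟨0, fun _ => y, fun i hi => absurd hi (Nat.not_lt_zero i), rfl, rfl⟩
  | @head a c hac _ ih =>
    obtain ⟨n, f, hf, hf0, hfn⟩ := ih
    refine ⟨n + 1, fun | 0 => a | i + 1 => f i, ?_, rfl, hfn⟩
    rintro (_ | i) hi
    · simpa [hf0] using hac
    · exact hf i (by omega)

lemma IsWalk.anc_first_or_last_or_anc (hw : IsWalk E n f)
    (hc : InteriorOn (ColliderReaches E S) 0 n f) {j : ℕ} (hj : j ≤ n) :
    Anc E (f j) (f 0) ∨ Anc E (f j) (f n) ∨ ∃ d ∈ S, Anc E (f j) d := by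
  rcases Nat.eq_zero_or_pos j with rfl | hj0
  · exact .inl .refl
  rcases hj.eq_or_lt with rfl | hjn
  · exact .inr (.inl .refl)
  rcases hw j hjn with hout | hin
  · rcases hw.transGen_last_or_anc hc hjn hout with h | h
    · exact .inr (.inl h.to_reflTransGen)
    · exact .inr (.inr h)
  have hprev := hw (j - 1) (by omega)
  rw [Nat.sub_add_cancel hj0] at hprev
  rcases hprev with hin' | hback
  · exact .inr (.inr (hc j hj0 hjn ⟨hin', hin⟩))
  -- the edge `f j → f (j - 1)` leaves `f j` forwards on the reversed walk
  have hrev := hw.rev.transGen_last_or_anc (j := n - j)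
    (hc.rev fun _ _ _ h hc' => h ⟨hc'.2, hc'.1⟩) (by omega)
    (by simpa [show n - (n - j) = j by omega, show n - (n - j + 1) = j - 1 by omega] using hback)
  simp only [show n - (n - j) = j by omega, Nat.sub_self] at hrev
  rcases hrev with h | h
  · exact .inl h.to_reflTransGen
  · exact .inr (.inr h)

/-- A new collider at the junction is an old one or, by acyclicity, sees a collider between
the two visits of the vertex. -/
lemma IsWalk.openAt_loop_junction (hdag : Irreflexive (TransGen E)) (hw : IsWalk E n f)
    (ho : InteriorOn (OpenAt E T T) 0 n f) {s t : ℕ} (hs : 0 < s) (hst : s < t) (htn : t < n)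
    (heq : f s = f t) : OpenAt E T T (f (s - 1)) (f s) (f (t + 1)) := by
  constructor
  · rintro ⟨hin, hin'⟩
    by_cases hcs : IsCollider E (f (s - 1)) (f s) (f (s + 1))
    · exact (ho s hs (by omega)).1 hcs
    have hout : E (f s) (f (s + 1)) := (hw s (by omega)).resolve_right fun h => hcs ⟨hin, h⟩
    rcases (hw.mono htn.le).transGen_last_or_anc
        ((ho.mono_bounds le_rfl htn.le).mono fun _ _ _ h => h.1) (by omega) hout with h | h
    · rw [← heq] at h
      exact (hdag _ h).elim
    · exact h
  · intro hnc hT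
    have hcs : IsCollider E (f (s - 1)) (f s) (f (s + 1)) :=
      by_contra fun h => (ho s hs (by omega)).2 h hT
    have hct : IsCollider E (f (t - 1)) (f t) (f (t + 1)) :=
      by_contra fun h => (ho t (by omega) htn).2 h (heq ▸ hT)
    exact hnc ⟨hcs.1, heq ▸ hct.2⟩

end Walks

section BackdoorWalks

variable {E : V → V → Prop} {T : Set V} {x y : V} {n : ℕ} {f : ℕ → V}

structure IsBackdoorWalk (E : V → V → Prop) (x y : V) (n : ℕ) (f : ℕ → V) : Prop where
  isWalk : IsWalk E n f
  first : f 0 = x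
  last : f n = y
  backdoor : E (f 1) (f 0)
  ne_first : InteriorOn (fun _ v _ => v ≠ x) 0 n f

namespace IsBackdoorWalk

lemma shortcut (hw : IsBackdoorWalk E x y n f) {s t : ℕ} (hs : 0 < s) (hst : s < t)
    (htn : t ≤ n) (heq : f s = f t) :
    IsBackdoorWalk E x y (s + (n - t)) (splice f (fun i => f (t + i)) s) where
  isWalk := isWalk_splice heq (hw.isWalk.mono (by omega)) (hw.isWalk.shift t)
  first := by rw [splice_of_le (Nat.zero_le _), hw.first]
  last := by
    rw [splice_of_ge heq (by omega), show t + (s + (n - t) - s) = n by omega, hw.last]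
  backdoor := by
    rw [splice_of_le hs, splice_of_le (Nat.zero_le _)]
    exact hw.backdoor
  ne_first := interiorOn_splice heq (hw.ne_first.mono_bounds le_rfl (by omega))
    (fun _ _ => hw.ne_first s hs (by omega)) (by simpa using hw.ne_first.shift t)

lemma exists_path {n : ℕ} {f : ℕ → V} (hdag : Irreflexive (TransGen E)) (hxy : x ≠ y)
    (hw : IsBackdoorWalk E x y n f)
    (ho : InteriorOn (OpenAt E T T) 0 n f) :
    ∃ q : GPath E x y, q.IsBackdoor ∧ q.ProperFrom {x} ∧ q.OpenGiven T := by
  by_cases hinj : ∀ i j, i ≤ n → j ≤ n → f i = f j → i = j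
  · have hn : 0 < n := Nat.pos_of_ne_zero fun h => hxy (by rw [← hw.first, ← hw.last, h])
    let q : GPath E x y := ⟨n, hn, f, hw.first, hw.last, hinj, hw.isWalk⟩
    refine ⟨q, hw.backdoor, fun i h1 h2 hx => ?_, ⟨fun i h1 h2 hc => ?_, fun i hc => ?_⟩⟩
    · rcases h2.lt_or_eq with h2 | rfl
      · exact hw.ne_first i h1 h2 hx
      · exact hxy (hx.symm.trans hw.last)
    · exact (ho i h1 h2).2 fun h => hc ⟨h1, h2, h⟩
    · exact (ho i hc.1 hc.2.1).1 hc.2.2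
  push Not at hinj
  obtain ⟨s, t, hst, htn, heq⟩ : ∃ s t, s < t ∧ t ≤ n ∧ f s = f t := by
    obtain ⟨i, j, hi, hj, hij, hne⟩ := hinj
    rcases hne.lt_or_gt with h | h
    · exact ⟨i, j, h, hj, hij⟩
    · exact ⟨j, i, h, hi, hij.symm⟩
  have hs : 0 < s := by
    refine Nat.pos_of_ne_zero fun hs0 => ?_
    subst hs0
    rcases htn.lt_or_eq with htn | rfl
    · exact hw.ne_first t (by omega) htn (heq.symm.trans hw.first)
    · exact hxy (hw.first.symm.trans (heq.trans hw.last))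
  refine (hw.shortcut hs hst htn heq).exists_path hdag hxy ?_
  exact interiorOn_splice heq (ho.mono_bounds le_rfl (by omega))
    (fun _ _ => hw.isWalk.openAt_loop_junction hdag ho hs hst (by omega) heq)
    (by simpa using ho.shift t)
termination_by n
decreasing_by omega

/-- The new walk runs backwards along a directed path from `f m` to `x`, then on along `f`. -/
lemma reroute_from_first (hdag : Irreflexive (TransGen E)) (hw : IsBackdoorWalk E x y n f)
    {m : ℕ} (hm : 0 < m) (hmn : m < n) (hnotT : ∀ d, Anc E (f m) d → d ∉ T)
    (hx : Anc E (f m) x) (hgood : InteriorOn (OpenAt E T T) m n f) :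
    ∃ n' f', IsBackdoorWalk E x y n' f' ∧ InteriorOn (OpenAt E T T) 0 n' f' := by
  obtain ⟨r, u, hu, hu0, hur⟩ := exists_isDirectedWalk hx
  have hr : 0 < r := Nat.pos_of_ne_zero fun h => hw.ne_first m hm hmn (by rw [← hu0, ← hur, h])
  have hux : ∀ i < r, u i ≠ x := fun i hi h => hdag x (by simpa [h, hur] using hu.transGen hi le_rfl)
  have hjoin : u (r - r) = f (m + 0) := by simpa using hu0
  have hsub : r - (r - 1) = 1 := by omega
  refine ⟨r + (n - m), splice (fun i => u (r - i)) (fun i => f (m + i)) r, ⟨?_, ?_, ?_, ?_, ?_⟩, ?_⟩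
  · exact isWalk_splice hjoin hu.isWalk.rev (hw.isWalk.shift m)
  · rw [splice_of_le (Nat.zero_le _), Nat.sub_zero, hur]
  · rw [splice_of_ge hjoin (by omega), show m + (r + (n - m) - r) = n by omega, hw.last]
  · rw [splice_of_le hr, splice_of_le (Nat.zero_le _), Nat.sub_zero]
    simpa [Nat.sub_add_cancel hr] using hu (r - 1) (by omega)
  · refine interiorOn_splice hjoin (fun i h1 h2 => hux _ (by omega)) (fun _ _ => ?_)
      (by simpa using hw.ne_first.shift m)
    simpa using hux 0 hr
  · refine interiorOn_splice hjoin ?_ (fun _ _ => ?_) (by simpa using hgood.shift m)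
    · refine (hu.interiorOn_openAt hdag fun i _ hi => hnotT _ ?_).rev fun _ _ _ h => h.symm
      exact hu0 ▸ hu.anc (Nat.zero_le i) hi.le
    · simp only [Nat.sub_self, hsub]
      exact (openAt_of_not_isCollider (u := f (m + 1)) (not_isCollider_of_edge_out hdag (hu 0 hr))
        (hu0 ▸ hnotT _ .refl)).symm

/-- The new walk follows `f` up to `f m`, then a directed path from `f m` to `y`. -/
lemma reroute_to_last (hdag : Irreflexive (TransGen E)) (hw : IsBackdoorWalk E x y n f)
    {m : ℕ} (hm : 0 < m) (hmn : m < n) (hnotT : ∀ d, Anc E (f m) d → d ∉ T)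
    (hx : ¬ Anc E (f m) x) (hy : Anc E (f m) y)
    (hA : InteriorOn (OpenAt E (insert y T) T) 0 n f) :
    ∃ n' f', IsBackdoorWalk E x y n' f' ∧ InteriorOn (OpenAt E (insert y T) T) 0 n' f' ∧
      InteriorOn (OpenAt E T T) (m - 1) n' f' := by
  obtain ⟨r, u, hu, hu0, hur⟩ := exists_isDirectedWalk hy
  have hdesc : ∀ i ≤ r, Anc E (f m) (u i) := fun i hi => hu0 ▸ hu.anc (Nat.zero_le i) hi
  have hchain : InteriorOn (OpenAt E T T) 0 r u :=
    hu.interiorOn_openAt hdag fun i _ hi => hnotT _ (hdesc i hi.le)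
  have hjunc : 0 < r → OpenAt E T T (f (m - 1)) (f m) (u 1) := fun hr =>
    openAt_of_not_isCollider (not_isCollider_of_edge_out hdag (hu0 ▸ hu 0 hr)) (hnotT _ .refl)
  refine ⟨m + r, splice f u m, ⟨?_, ?_, ?_, ?_, ?_⟩, ?_, ?_⟩
  · exact isWalk_splice hu0.symm (hw.isWalk.mono hmn.le) hu.isWalk
  · rw [splice_of_le (Nat.zero_le _), hw.first]
  · rw [splice_of_ge hu0.symm (by omega), Nat.add_sub_cancel_left, hur]
  · rw [splice_of_le hm, splice_of_le (Nat.zero_le _)]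
    exact hw.backdoor
  · exact interiorOn_splice hu0.symm (hw.ne_first.mono_bounds le_rfl hmn.le)
      (fun _ _ => hw.ne_first m hm hmn) fun i _ hi h => hx (h ▸ hdesc i hi.le)
  · exact interiorOn_splice hu0.symm (hA.mono_bounds le_rfl hmn.le)
      (fun _ hr => (hjunc hr).mono_left (Set.subset_insert y T))
      (hchain.mono fun _ _ _ h => h.mono_left (Set.subset_insert y T))
  · exact interiorOn_splice hu0.symm (fun i h1 h2 => absurd h2 (by omega)) (fun _ => hjunc) hchain

/-- Positions beyond `N` are open given `T`; a collider at `N + 1` without descendant in `T`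
is thus the last one, and is removed by rerouting. -/
lemma exists_openAt {N : ℕ} (hdag : Irreflexive (TransGen E)) {n : ℕ} {f : ℕ → V}
    (hw : IsBackdoorWalk E x y n f) (hA : InteriorOn (OpenAt E (insert y T) T) 0 n f)
    (hN : InteriorOn (OpenAt E T T) N n f) :
    ∃ n' f', IsBackdoorWalk E x y n' f' ∧ InteriorOn (OpenAt E T T) 0 n' f' := by
  induction N generalizing n f with
  | zero => exact ⟨n, f, hw, hN⟩
  | succ N ih =>
    by_cases hNn : N + 1 < n
    swap
    · exact ih hw hA (hN.of_lo_succ fun h => absurd h hNn)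
    rcases (hA (N + 1) (by omega) hNn).openAt_or_of_insert with hgood | ⟨hnotT, hy⟩
    · exact ih hw hA (hN.of_lo_succ fun _ => hgood)
    by_cases hx : Anc E (f (N + 1)) x
    · exact hw.reroute_from_first hdag (by omega) hNn hnotT hx hN
    · obtain ⟨n', f', hw', hA', hN'⟩ := hw.reroute_to_last hdag (by omega) hNn hnotT hx hy hA
      exact ih hw' hA' hN'

end IsBackdoorWalk

end BackdoorWalks

namespace GPath

variable {E : V → V → Prop} {a b : V} {S T : Set V}

lemma IsBackdoor.not_causal (hdag : Irreflexive (TransGen E)) {p : GPath E a b}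
    (hp : p.IsBackdoor) : ¬ p.Causal :=
  fun hc => edge_asymm hdag (hc 0 p.len_pos) hp

lemma anc_of_collidersReach (p : GPath E a b)
    (hc : ∀ i, p.IsColliderAt i → ∃ d ∈ S, Anc E (p.vtx i) d) {j : ℕ} (hj : j ≤ p.len) :
    Anc E (p.vtx j) a ∨ Anc E (p.vtx j) b ∨ ∃ d ∈ S, Anc E (p.vtx j) d := by
  have := IsWalk.anc_first_or_last_or_anc (E := E) p.adj (fun i h1 h2 h => hc i ⟨h1, h2, h⟩) hj
  rwa [p.first, p.last] at this

lemma transGen_of_openGiven_of_not_openGiven_union {w x y : V} (p : GPath E w y)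
    (ho : p.OpenGiven T) (hno : ¬ p.OpenGiven (T ∪ {x})) (hxy : x ≠ y) (hxw : ¬ Anc E x w)
    (hxT : ∀ s ∈ T, ¬ Anc E x s) : TransGen E x y := by
  obtain ⟨j, hj, rfl⟩ : ∃ j ≤ p.len, p.vtx j = x := by
    by_contra! h
    refine hno ⟨fun i h1 h2 hc hx => ?_, fun i hc => ?_⟩
    · exact hx.elim (ho.1 i h1 h2 hc) (h i h2.le)
    · obtain ⟨d, hd, h⟩ := ho.2 i hc
      exact ⟨d, .inl hd, h⟩
  rcases p.anc_of_collidersReach ho.2 hj with h | h | ⟨d, hd, h⟩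
  · exact (hxw h).elim
  · exact (reflTransGen_iff_eq_or_transGen.1 h).resolve_left hxy.symm
  · exact (hxT d hd h).elim

lemma exists_proper_backdoor_of_openGiven (hdag : Irreflexive (TransGen E)) (hab : a ≠ b)
    (hTS : T ⊆ S) (hS : ∀ s ∈ S, Anc E s b) (p : GPath E a b) (hp : p.IsBackdoor)
    (ho : p.OpenGiven S) : ∃ q : GPath E a b, q.IsBackdoor ∧ q.ProperFrom {a} ∧ q.OpenGiven T := by
  have hw : IsBackdoorWalk E a b p.len p.vtx :=
    ⟨p.adj, p.first, p.last, hp, fun i _ hi h => by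
      have := p.inj i 0 hi.le (Nat.zero_le _) (h.trans p.first.symm)
      omega⟩
  have hA : InteriorOn (OpenAt E (insert b T) T) 0 p.len p.vtx := by
    refine fun i h1 h2 => ⟨fun hc => ?_, fun hc hT => ho.1 i h1 h2 (fun h => hc h.2.2) (hTS hT)⟩
    obtain ⟨d, hd, h⟩ := ho.2 i ⟨h1, h2, hc⟩
    exact ⟨b, .inl rfl, h.trans (hS d hd)⟩
  obtain ⟨n, f, hw', ho'⟩ := hw.exists_openAt (N := p.len) hdag hA fun i _ h => absurd h (by omega)
  exact hw'.exists_path hdag hab ho'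

end GPath

def ancestors (E : V → V → Prop) (S : Set V) : Set V := {a | ∃ s ∈ S, Anc E a s}

namespace AdjustmentCriterion

variable {E : V → V → Prop} {X Y Z : Set V}

lemma inter_ancestors (h : AdjustmentCriterion E X Y Z) :
    AdjustmentCriterion E X Y (Z ∩ ancestors E (X ∪ Y)) := by
  refine ⟨fun w hw hp z hz => h.1 w hw hp z hz.1, fun x hx y hy p hpr hnc ho => ?_⟩
  refine h.2 x hx y hy p hpr hnc ⟨fun i h1 h2 hc hz => ho.1 i h1 h2 hc ⟨hz, ?_⟩, fun i hc => ?_⟩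
  · rcases p.anc_of_collidersReach ho.2 h2.le with h | h | ⟨d, hd, h⟩
    · exact ⟨x, .inl hx, h⟩
    · exact ⟨y, .inr hy, h⟩
    · obtain ⟨s, hs, hds⟩ := hd.2
      exact ⟨s, hs, h.trans hds⟩
  · obtain ⟨d, hd, h⟩ := ho.2 i hc
    exact ⟨d, hd.1, h⟩

lemma subset_ancestors_of_minimal (h : AdjustmentCriterion E X Y Z)
    (hmin : ∀ Z', Z' ⊂ Z → ¬ AdjustmentCriterion E X Y Z') : Z ⊆ ancestors E (X ∪ Y) := by
  by_contra hsub
  refine hmin _ (Set.ssubset_iff_subset_ne.2 ⟨Set.inter_subset_left, fun he => hsub ?_⟩)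
    h.inter_ancestors
  rw [← he]
  exact Set.inter_subset_right

lemma blocksBackdoor (hdag : Irreflexive (TransGen E)) {x y : V} {S : Set V} (hxy : x ≠ y)
    (h : AdjustmentCriterion E {x} {y} Z) (hZS : Z ⊆ S) (hS : ∀ s ∈ S, Anc E s y) :
    BlocksBackdoor E x y S := fun p hp ho => by
  obtain ⟨q, hq, hqpr, hqo⟩ := p.exists_proper_backdoor_of_openGiven hdag hxy hZS hS hp ho
  exact h.2 x rfl y rfl q hqpr (hq.not_causal hdag) hqo

end AdjustmentCriterion

theorem stmt_8_general (E : V → V → Prop)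
    (hdag : Irreflexive (Relation.TransGen E))
    (k : ℕ) (X : Fin (k + 1) → V)
    (Y : V) (W : Set V)
    (hXY : ∀ i, X i ≠ Y)
    (hordWX : ∀ i, ∀ w ∈ W, ¬ Anc E (X i) w)
    (Wf : Fin (k + 1) → V) (hWf : ∀ i, Wf i ∈ W)
    (T : Fin (k + 1) → Set V)
    (hT : ∀ i, T i ⊆ (W \ Set.range Wf) ∪ (Set.range X \ descendants E {X i}))
    (hconn : ∀ i, ∃ p : GPath E (Wf i) Y, p.OpenGiven (T i))
    (hsep : ∀ i, ∀ p : GPath E (Wf i) Y, ¬ p.OpenGiven (T i ∪ {X i}))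
    (Zf : Fin (k + 1) → Set V) (hZfT : ∀ i, Zf i ⊆ T i)
    (hZfadj : ∀ i, AdjustmentCriterion E {X i} {Y} (Zf i))
    (hZfmin : ∀ i, ∀ Z', Z' ⊂ Zf i → ¬ AdjustmentCriterion E {X i} {Y} Z') :
    (∀ i, Relation.TransGen E (X i) Y) ∧
      BackdoorCriterion E (Set.range X) {Y} ((⋃ i, Zf i) \ Set.range X) := by
  have hXT : ∀ i, ∀ s ∈ T i, ¬ Anc E (X i) s := fun i s hs => by
    rcases hT i hs with ⟨hW, -⟩ | ⟨-, hnd⟩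
    · exact hordWX i s hW
    · exact fun h => hnd ⟨X i, rfl, h⟩
  have hXtoY : ∀ i, TransGen E (X i) Y := fun i => by
    obtain ⟨p, hp⟩ := hconn i
    exact p.transGen_of_openGiven_of_not_openGiven_union hp (hsep i p) (hXY i)
      (hordWX i _ (hWf i)) (hXT i)
  have hZY : ∀ i, ∀ z ∈ Zf i, Anc E z Y := fun i z hz => by
    obtain ⟨s, hs | hs, hzs⟩ := (hZfadj i).subset_ancestors_of_minimal (hZfmin i) hz
    · exact hzs.trans (Set.mem_singleton_iff.1 hs ▸ (hXtoY i).to_reflTransGen)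
    · exact Set.mem_singleton_iff.1 hs ▸ hzs
  refine ⟨hXtoY, Set.eq_empty_iff_forall_notMem.2 ?_, ?_⟩
  · rintro z ⟨⟨hz, hzX⟩, -, ⟨m, rfl⟩, hanc⟩
    obtain ⟨i, hzi⟩ := Set.mem_iUnion.1 hz
    rcases hT i (hZfT i hzi) with ⟨hW, -⟩ | ⟨hX, -⟩
    · exact hordWX m z hW hanc
    · exact hzX hX
  rintro _ ⟨j, rfl⟩ y hy
  obtain rfl : Y = y := (Set.mem_singleton_iff.1 hy).symm
  have hZS : Zf j ⊆ ((⋃ i, Zf i) \ Set.range X) ∪ (Set.range X \ {X j}) := fun z hz => by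
    by_cases hzX : z ∈ Set.range X
    · refine .inr ⟨hzX, fun hzj => ?_⟩
      rw [Set.mem_singleton_iff.1 hzj] at hz
      exact hXT j _ (hZfT j hz) .refl
    · exact .inl ⟨Set.mem_iUnion.2 ⟨j, hz⟩, hzX⟩
  have hSY : ∀ s ∈ ((⋃ i, Zf i) \ Set.range X) ∪ (Set.range X \ {X j}), Anc E s Y := by
    rintro s (⟨hs, -⟩ | ⟨⟨m, rfl⟩, -⟩)
    · obtain ⟨i, hsi⟩ := Set.mem_iUnion.1 hs
      exact hZY i s hsi
    · exact (hXtoY m).to_reflTransGen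
  exact (hZfadj j).blocksBackdoor hdag (hXY j) hZS hSY

/-- **R1 Combine (graphical version).** With treatments `X i`, witnesses `Wf i` and
sets `T i ⊆ (W \ range Wf) ∪ (range X \ De(X i))` satisfying the
d-connection/d-separation conditions, and minimal sets `Zf i ⊆ T i` satisfying the
adjustment criterion relative to `({X i}, {Y})`, every `X i` has a directed path to `Y`
with at least one edge and `(⋃ i, Zf i) \ range X` satisfies the back-door criterion
relative to `(range X, {Y})`. -/
theorem stmt_8 [Fintype V] (E : V → V → Prop)
    (hdag : Irreflexive (Relation.TransGen E))
    (k : ℕ) (X : Fin (k + 1) → V) (hXinj : Function.Injective X)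
    (Y : V) (W : Set V)
    (hXY : ∀ i, X i ≠ Y) (hXW : ∀ i, X i ∉ W) (hYW : Y ∉ W)
    (hordWX : ∀ i, ∀ w ∈ W, ¬ Anc E (X i) w)
    (hordWY : ∀ w ∈ W, ¬ Anc E Y w)
    (hordXY : ∀ i, ¬ Anc E Y (X i))
    (Wf : Fin (k + 1) → V) (hWf : ∀ i, Wf i ∈ W)
    (T : Fin (k + 1) → Set V)
    (hT : ∀ i, T i ⊆ (W \ Set.range Wf) ∪ (Set.range X \ descendants E {X i}))
    (hconn : ∀ i, ∃ p : GPath E (Wf i) Y, p.OpenGiven (T i))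
    (hsep : ∀ i, ∀ p : GPath E (Wf i) Y, ¬ p.OpenGiven (T i ∪ {X i}))
    (Zf : Fin (k + 1) → Set V) (hZfT : ∀ i, Zf i ⊆ T i)
    (hZfadj : ∀ i, AdjustmentCriterion E {X i} {Y} (Zf i))
    (hZfmin : ∀ i, ∀ Z', Z' ⊂ Zf i → ¬ AdjustmentCriterion E {X i} {Y} Z') :
    (∀ i, Relation.TransGen E (X i) Y) ∧
      BackdoorCriterion E (Set.range X) {Y} ((⋃ i, Zf i) \ Set.range X) :=
  stmt_8_general E hdag k X Y W hXY hordWX Wf hWf T hT hconn hsep Zf hZfT hZfadj hZfmin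
end
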